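/- arXiv:2407.05904 — 10 statements merged into one kernel-verified Lean document; each statement's English description precedes it below -/
import Mathlib

section
/- Let w ∈ Sₙ satisfy w(k+1) > w(k+2) > ⋯ > w(n) for some k ∈ [n-1], and let k' ≤ k. If u ≤ w in the k'-Bruhat order (i.e., u is obtained from w by a sequence of covers u' = w't_{i,j} ⋖ w' with i ≤ k' < j and ℓ(w') = ℓ(u')+1), then u also satisfies u(k+1) > u(k+2) > ⋯ > u(n). -/
/-- Number of inversions of a permutation of `Fin n`. -/
def invCount {n : ℕ} (w : Equiv.Perm (Fin n)) : ℕ :=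
  (Finset.univ.filter (fun p : Fin n × Fin n => p.1 < p.2 ∧ w p.2 < w p.1)).card

/-- `w ∈ Sₙ^{k↘}` (1-indexed: `w(k+1) > ⋯ > w(n)`); positions are 0-indexed here. -/
def DescFrom (n k : ℕ) (w : Equiv.Perm (Fin n)) : Prop :=
  ∀ p q : Fin n, k ≤ (p : ℕ) → p < q → w q < w p

/-- `u ⋖ₖ w` : cover in the `k`-Bruhat order (1-indexed `k`; positions 0-indexed,
so `i ≤ k < j` becomes `↑i < k ≤ ↑j`). -/
def kCover (n k : ℕ) (u w : Equiv.Perm (Fin n)) : Prop :=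
  ∃ i j : Fin n, (i : ℕ) < k ∧ k ≤ (j : ℕ) ∧ u = w * Equiv.swap i j ∧
    invCount w = invCount u + 1

/-- An increasing `k`-chain `v 0 ⋖ₖ v 1 ⋖ₖ ⋯ ⋖ₖ v d`, with
`v m = v (m+1) * swap (a m) (b m)` and strictly increasing smaller swapped values
`v m (a m)`. -/
def IsIncKChain (n k : ℕ) {d : ℕ} (v : Fin (d + 1) → Equiv.Perm (Fin n))
    (a b : Fin d → Fin n) : Prop :=
  (∀ m : Fin d, (a m : ℕ) < k ∧ k ≤ (b m : ℕ) ∧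
      v m.castSucc = v m.succ * Equiv.swap (a m) (b m) ∧
      invCount (v m.succ) = invCount (v m.castSucc) + 1) ∧
  ∀ m m' : Fin d, m < m' → v m.castSucc (a m) < v m'.castSucc (a m')

/-- There is an increasing `k`-chain of length `d` (number of covers) from `u` to `w`. -/
def ExIncKChainLen (n k d : ℕ) (u w : Equiv.Perm (Fin n)) : Prop :=
  ∃ (v : Fin (d + 1) → Equiv.Perm (Fin n)) (a b : Fin d → Fin n),
    IsIncKChain n k v a b ∧ v 0 = u ∧ v (Fin.last d) = w

open Equiv Finset in
lemma key_ineq {n : ℕ} (v : Equiv.Perm (Fin n)) (i j : Fin n) (hij : i < j) (hv : v i < v j)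
    (T : Finset (Fin n × Fin n))
    (hT1 : ∀ x ∈ T, x.1 < x.2 ∧ (v * Equiv.swap i j) x.2 < (v * Equiv.swap i j) x.1)
    (hT2 : ∀ x ∈ T, x.1 = i ∧ (x.2 = j ∨ (x.2 < j ∧ v i < v x.2))) :
    invCount v + T.card ≤ invCount (v * Equiv.swap i j) := by
  classical
  set v' := v * Equiv.swap i j with hv'def
  have hv'app : ∀ a : Fin n, v' a = v (Equiv.swap i j a) := fun a => rfl
  have hv'swap : ∀ a : Fin n, v' (Equiv.swap i j a) = v a := by
    intro a; rw [hv'app, Equiv.swap_apply_self]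
  set s : Finset (Fin n × Fin n) :=
    Finset.univ.filter (fun p => p.1 < p.2 ∧ v p.2 < v p.1) with hs
  set t : Finset (Fin n × Fin n) :=
    Finset.univ.filter (fun p => p.1 < p.2 ∧ v' p.2 < v' p.1) with ht
  have hTt : T ⊆ t := by
    intro x hx
    simp only [ht, Finset.mem_filter, Finset.mem_univ, true_and]
    exact hT1 x hx
  set C : Fin n × Fin n → Prop :=
    fun x => (x.1 = i ∧ x.2 < j) ∨ (x.2 = j ∧ i < x.1) with hCdef
  set φ : Fin n × Fin n → Fin n × Fin n :=
    fun x => if C x then x else (Equiv.swap i j x.1, Equiv.swap i j x.2) with hφdef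
  have hmain : ∀ x ∈ s, (φ x ∈ t ∧ φ x ∉ T) ∧ (C x ↔ C (φ x)) := by
    rintro ⟨a, b⟩ hx
    simp only [hs, Finset.mem_filter, Finset.mem_univ, true_and] at hx
    obtain ⟨hab, hvba⟩ := hx
    by_cases hCx : C (a, b)
    · have hφx : φ (a, b) = (a, b) := if_pos hCx
      rw [hφx]
      refine ⟨⟨?_, ?_⟩, Iff.rfl⟩
      · simp only [ht, Finset.mem_filter, Finset.mem_univ, true_and]
        refine ⟨hab, ?_⟩
        rcases hCx with ⟨ha, hbj⟩ | ⟨hb, hia⟩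
        · have hbne_i : b ≠ i := ha ▸ hab.ne'
          have hbne_j : b ≠ j := hbj.ne
          rw [show a = i from ha, hv'app, hv'app, Equiv.swap_apply_left,
            Equiv.swap_apply_of_ne_of_ne hbne_i hbne_j]
          exact lt_trans (ha ▸ hvba) hv
        · have hane_i : a ≠ i := hia.ne'
          have hane_j : a ≠ j := hb ▸ hab.ne
          rw [show b = j from hb, hv'app, hv'app, Equiv.swap_apply_right,
            Equiv.swap_apply_of_ne_of_ne hane_i hane_j]
          exact lt_trans hv (hb ▸ hvba)
      · intro hmem
        obtain ⟨h1, h2⟩ := hT2 _ hmem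
        simp only at h1 h2
        rcases hCx with ⟨ha, hbj⟩ | ⟨hb, hia⟩
        · rcases h2 with h2 | ⟨_, h2⟩
          · exact absurd h2 hbj.ne
          · exact absurd (lt_trans h2 (ha ▸ hvba)) (lt_irrefl _)
        · exact absurd h1 hia.ne'
    · have hφx : φ (a, b) = (Equiv.swap i j a, Equiv.swap i j b) := if_neg hCx
      rw [hφx]
      -- position facts
      have hijne : i ≠ j := hij.ne
      have hkey : Equiv.swap i j a < Equiv.swap i j b ∧
          ¬ C (Equiv.swap i j a, Equiv.swap i j b) ∧
          ((Equiv.swap i j a, Equiv.swap i j b) ∈ T → False) := by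
        rcases eq_or_ne a i with rfl | hai
        · -- a = i
          have hbne_j : b ≠ j := by
            rintro rfl
            exact absurd hv (not_lt.2 hvba.le)
          have hjb : j < b := by
            have : ¬ (b < j) := fun hbj => hCx (Or.inl ⟨rfl, hbj⟩)
            exact lt_of_le_of_ne (not_lt.1 this) (Ne.symm hbne_j)
          have hbne_i : b ≠ a := hab.ne'
          rw [Equiv.swap_apply_left, Equiv.swap_apply_of_ne_of_ne hbne_i hbne_j]
          refine ⟨hjb, ?_, ?_⟩
          · rintro (⟨h1, _⟩ | ⟨h1, _⟩)
            · exact hijne h1.symm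
            · exact hbne_j h1
          · intro hmem
            obtain ⟨h1, _⟩ := hT2 _ hmem
            exact hijne h1.symm
        · rcases eq_or_ne a j with rfl | haj
          · -- a = j
            have hbne_j : b ≠ a := hab.ne'
            have hbne_i : b ≠ i := (lt_trans hij hab).ne'
            rw [Equiv.swap_apply_right, Equiv.swap_apply_of_ne_of_ne hbne_i hbne_j]
            refine ⟨lt_trans hij hab, ?_, ?_⟩
            · rintro (⟨_, h2⟩ | ⟨h1, _⟩)
              · exact absurd (lt_trans hab h2) (lt_irrefl _)
              · exact hbne_j h1
            · intro hmem
              obtain ⟨_, h2⟩ := hT2 _ hmem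
              simp only at h2
              rcases h2 with h2 | ⟨h2, _⟩
              · exact hbne_j h2
              · exact absurd (lt_trans hab h2) (lt_irrefl _)
          · rcases eq_or_ne b i with rfl | hbi
            · -- b = i
              have hai' : a < b := hab
              rw [Equiv.swap_apply_left, Equiv.swap_apply_of_ne_of_ne hai haj]
              refine ⟨lt_trans hab hij, ?_, ?_⟩
              · rintro (⟨h1, _⟩ | ⟨_, h2⟩)
                · exact hai h1
                · exact absurd (lt_trans h2 hab) (lt_irrefl _)
              · intro hmem
                obtain ⟨h1, _⟩ := hT2 _ hmem
                exact hai h1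
            · rcases eq_or_ne b j with rfl | hbj
              · -- b = j
                have hai' : a < i := by
                  have : ¬ (i < a) := fun hia => hCx (Or.inr ⟨rfl, hia⟩)
                  exact lt_of_le_of_ne (not_lt.1 this) hai
                rw [Equiv.swap_apply_right, Equiv.swap_apply_of_ne_of_ne hai haj]
                refine ⟨hai', ?_, ?_⟩
                · rintro (⟨h1, _⟩ | ⟨h1, _⟩)
                  · exact hai h1
                  · exact hijne h1
                · intro hmem
                  obtain ⟨h1, _⟩ := hT2 _ hmem
                  exact hai h1
              · -- neither
                rw [Equiv.swap_apply_of_ne_of_ne hai haj,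
                  Equiv.swap_apply_of_ne_of_ne hbi hbj]
                refine ⟨hab, hCx, ?_⟩
                intro hmem
                obtain ⟨h1, _⟩ := hT2 _ hmem
                exact hai h1
      obtain ⟨hlt, hnC, hnT⟩ := hkey
      refine ⟨⟨?_, hnT⟩, ?_⟩
      · simp only [ht, Finset.mem_filter, Finset.mem_univ, true_and]
        refine ⟨hlt, ?_⟩
        rw [hv'swap, hv'swap]
        exact hvba
      · exact ⟨fun h => absurd h hCx, fun h => absurd h hnC⟩
  have hmaps : ∀ x ∈ s, φ x ∈ t \ T := by
    intro x hx
    obtain ⟨⟨h1, h2⟩, _⟩ := hmain x hx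
    exact Finset.mem_sdiff.mpr ⟨h1, h2⟩
  have hinj : Set.InjOn φ s := by
    intro x hx y hy hxy
    obtain ⟨_, hCx⟩ := hmain x hx
    obtain ⟨_, hCy⟩ := hmain y hy
    by_cases hc : C x
    · have hcy : C y := hCy.mpr (hxy ▸ hCx.mp hc)
      have : φ x = x := if_pos hc
      have hy' : φ y = y := if_pos hcy
      rw [this, hy'] at hxy
      exact hxy
    · have hcy : ¬ C y := fun hcy => hc (hCx.mpr (hxy ▸ hCy.mp hcy))
      have hx' : φ x = (Equiv.swap i j x.1, Equiv.swap i j x.2) := if_neg hc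
      have hy' : φ y = (Equiv.swap i j y.1, Equiv.swap i j y.2) := if_neg hcy
      rw [hx', hy'] at hxy
      have h1 : Equiv.swap i j x.1 = Equiv.swap i j y.1 := congrArg Prod.fst hxy
      have h2 : Equiv.swap i j x.2 = Equiv.swap i j y.2 := congrArg Prod.snd hxy
      have e1 := (Equiv.swap i j).injective h1
      have e2 := (Equiv.swap i j).injective h2
      exact Prod.ext e1 e2
  have hcard : s.card ≤ (t \ T).card := Finset.card_le_card_of_injOn φ hmaps hinj
  have hsd : (t \ T).card + T.card = t.card := Finset.card_sdiff_add_card_eq_card hTt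
  have hvs : invCount v = s.card := rfl
  have hvt : invCount v' = t.card := rfl
  omega

lemma desc_step {n k k' : ℕ} (hk' : k' ≤ k) (c u : Equiv.Perm (Fin n))
    (hc : DescFrom n k c) (hcov : kCover n k' u c) : DescFrom n k u := by
  obtain ⟨i, j, hik', hk'j, huc, hlen⟩ := hcov
  have hij : i < j := Fin.lt_def.mpr (by omega)
  have hijne : i ≠ j := hij.ne
  have huapp : ∀ a : Fin n, u a = c (Equiv.swap i j a) := by
    intro a; rw [huc]; rfl
  by_cases hjk : (j : ℕ) < k
  · -- all swapped positions below k
    intro p q hkp hpq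
    have hpi : p ≠ i := by rw [Fin.ne_iff_vne]; omega
    have hpj : p ≠ j := by rw [Fin.ne_iff_vne]; omega
    have hqk : k ≤ (q : ℕ) := le_of_lt (lt_of_le_of_lt hkp (Fin.lt_def.mp hpq))
    have hqi : q ≠ i := by rw [Fin.ne_iff_vne]; omega
    have hqj : q ≠ j := by rw [Fin.ne_iff_vne]; omega
    rw [huapp, huapp, Equiv.swap_apply_of_ne_of_ne hpi hpj,
      Equiv.swap_apply_of_ne_of_ne hqi hqj]
    exact hc p q hkp hpq
  · push_neg at hjk
    -- (A) : c j < c i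
    have hA : c j < c i := by
      by_contra hAc
      push_neg at hAc
      have hcij : c i < c j := lt_of_le_of_ne hAc (fun h => hijne (c.injective h))
      have hkey := key_ineq c i j hij hcij {(i, j)} ?_ ?_
      · rw [← huc] at hkey
        simp only [Finset.card_singleton] at hkey
        omega
      · intro x hx
        simp only [Finset.mem_singleton] at hx
        subst hx
        rw [← huc]
        refine ⟨hij, ?_⟩
        rw [huapp, huapp, Equiv.swap_apply_left, Equiv.swap_apply_right]
        exact hcij
      · intro x hx
        simp only [Finset.mem_singleton] at hx
        subst hx
        exact ⟨rfl, Or.inl rfl⟩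
    -- (B) : no bad middle value
    have hB : ∀ p : Fin n, k ≤ (p : ℕ) → p < j → ¬ (c p < c i) := by
      intro p hkp hpj hbad
      have hpi : i < p := Fin.lt_def.mpr (by omega)
      have hpne_i : p ≠ i := hpi.ne'
      have hpne_j : p ≠ j := hpj.ne
      have hcjp : c j < c p := hc p j hkp hpj
      have huij : u i < u j := by
        rw [huapp, huapp, Equiv.swap_apply_left, Equiv.swap_apply_right]
        exact hA
      have hup : u p = c p := by
        rw [huapp, Equiv.swap_apply_of_ne_of_ne hpne_i hpne_j]
      have hcu : u * Equiv.swap i j = c := by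
        rw [huc, mul_assoc, Equiv.swap_mul_self, mul_one]
      have hkey := key_ineq u i j hij huij {(i, j), (i, p)} ?_ ?_
      · rw [hcu] at hkey
        have hcard : ({(i, j), (i, p)} : Finset (Fin n × Fin n)).card = 2 := by
          rw [Finset.card_insert_of_notMem, Finset.card_singleton]
          simp only [Finset.mem_singleton, Prod.mk.injEq, not_and]
          intro _
          exact hpne_j.symm
        rw [hcard] at hkey
        omega
      · intro x hx
        rw [hcu]
        simp only [Finset.mem_insert, Finset.mem_singleton] at hx
        rcases hx with rfl | rfl
        · exact ⟨hij, hA⟩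
        · exact ⟨hpi, hbad⟩
      · intro x hx
        simp only [Finset.mem_insert, Finset.mem_singleton] at hx
        rcases hx with rfl | rfl
        · exact ⟨rfl, Or.inl rfl⟩
        · refine ⟨rfl, Or.inr ⟨hpj, ?_⟩⟩
          rw [huapp, huapp, Equiv.swap_apply_left,
            Equiv.swap_apply_of_ne_of_ne hpne_i hpne_j]
          exact hcjp
    -- conclude
    intro p q hkp hpq
    have hqk : k ≤ (q : ℕ) := le_of_lt (lt_of_le_of_lt hkp (Fin.lt_def.mp hpq))
    have hpi : p ≠ i := by rw [Fin.ne_iff_vne]; omega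
    have hqi : q ≠ i := by rw [Fin.ne_iff_vne]; omega
    rcases eq_or_ne p j with rfl | hpj
    · -- p = j, q > j
      have hqj : q ≠ p := hpq.ne'
      rw [huapp, huapp, Equiv.swap_apply_right, Equiv.swap_apply_of_ne_of_ne hqi hqj]
      exact lt_trans (hc p q hkp hpq) hA
    · rcases eq_or_ne q j with rfl | hqj
      · -- q = j, p < j
        rw [huapp, huapp, Equiv.swap_apply_right, Equiv.swap_apply_of_ne_of_ne hpi hpj]
        have := hB p hkp hpq
        have hne : c i ≠ c p := fun h => hpi (c.injective h.symm)
        rcases lt_or_ge (c p) (c i) with h | h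
        · exact absurd h this
        · exact lt_of_le_of_ne h hne
      · rw [huapp, huapp, Equiv.swap_apply_of_ne_of_ne hpi hpj,
          Equiv.swap_apply_of_ne_of_ne hqi hqj]
        exact hc p q hkp hpq

theorem stmt0 (n k k' : ℕ) (hk1 : 1 ≤ k) (hk2 : k ≤ n - 1) (hk'1 : 1 ≤ k')
    (hk' : k' ≤ k) (w u : Equiv.Perm (Fin n)) (hw : DescFrom n k w)
    (h : Relation.ReflTransGen (kCover n k') u w) :
    DescFrom n k u := by
  induction h using Relation.ReflTransGen.head_induction_on with
  | refl => exact hw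
  | head hstep _ ih => exact desc_step hk' _ _ ih hstep
end

section
/- Let w₀ denote the longest permutation in Sₙ (w₀(i) = n+1-i). Let (u_{n-1}, u_{n-2}, …, u₁, u₀) be a sequence of permutations in Sₙ with u₀ = w₀ such that for each i ∈ [n-1], u_i ≤ᵢ u_{i-1} in the i-Bruhat order. Then for each i, u_i satisfies u_i(i+1) > u_i(i+2) > ⋯ > u_i(n). -/
/-!
A cover `w * t_{ij} ⋖ w` with `i < j` forces `w i > w j` with no value `w m`, `i < m < j`, strictly
between them: right multiplication by a transposition that sorts a pair lowers the length, so an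
intermediate value would let `t_{ij} = t_{im} t_{mj} t_{im}` lower it by at least three. For a
`k`-cover (`i < k ≤ j`) this means that moving `w i` to position `j` keeps the positions `≥ k`
decreasing, so `Sₙ^{k↘}` is closed downwards along `≤ₖ`. Since `w₀ ∈ Sₙ^{0↘}` and
`Sₙ^{(k-1)↘} ⊆ Sₙ^{k↘}`, induction along the chain finishes the proof.
-/

open Equiv Finset Relation

section

variable {n : ℕ}

def inversions (w : Perm (Fin n)) : Finset (Fin n × Fin n) :=
  univ.filter fun x => x.1 < x.2 ∧ w x.2 < w x.1

lemma mem_inversions {w : Perm (Fin n)} {x : Fin n × Fin n} :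
    x ∈ inversions w ↔ x.1 < x.2 ∧ w x.2 < w x.1 := by
  simp [inversions]

theorem invCount_lt_invCount_mul_swap (w : Perm (Fin n)) {p q : Fin n} (hpq : p < q)
    (hw : w p < w q) : invCount w < invCount (w * swap p q) := by
  set s := swap p q
  -- `f` moves an inversion `(x, y)` to `(s x, s y)` unless `s` reverses its order; the pairs it
  -- leaves in place are `(p, m)` and `(m, q)` with `p < m < q`, which stay inversions as `w p < w q`.
  let f : Fin n × Fin n → Fin n × Fin n := fun x => if s x.1 < s x.2 then (s x.1, s x.2) else x
  have hmaps : Set.MapsTo f (inversions w) ((inversions (w * s)).erase (p, q)) := by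
    rintro ⟨x, y⟩ hxy
    simp only [mem_coe, mem_inversions] at hxy
    simp only [f, mem_coe, mem_erase, mem_inversions, Perm.mul_apply]
    split_ifs <;> grind
  have hinj : Set.InjOn f (inversions w) := by
    rintro ⟨x, y⟩ hxy ⟨x', y'⟩ hxy' hf
    simp only [mem_coe, mem_inversions] at hxy hxy'
    simp only [f] at hf
    split_ifs at hf <;> grind
  calc invCount w ≤ #((inversions (w * s)).erase (p, q)) := card_le_card_of_injOn f hmaps hinj
    _ < #(inversions (w * s)) := card_erase_lt_of_mem (by simp [mem_inversions, s, hpq, hw])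

theorem invCount_mul_swap_lt (w : Perm (Fin n)) {p q : Fin n} (hpq : p < q)
    (hw : w q < w p) : invCount (w * swap p q) < invCount w := by
  simpa [mul_assoc] using invCount_lt_invCount_mul_swap (w * swap p q) hpq (by simpa)

theorem lt_of_invCount_eq_invCount_mul_swap_add_one {w : Perm (Fin n)} {i j : Fin n} (hij : i < j)
    (h : invCount w = invCount (w * swap i j) + 1) : w j < w i := by
  by_contra! hle
  have := invCount_lt_invCount_mul_swap w hij (hle.lt_of_ne (w.injective.ne hij.ne))
  omega

theorem not_between_of_invCount_eq_invCount_mul_swap_add_one {w : Perm (Fin n)} {i m j : Fin n}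
    (him : i < m) (hmj : m < j) (h : invCount w = invCount (w * swap i j) + 1) :
    ¬ (w j < w m ∧ w m < w i) := by
  rintro ⟨hjm, hmi⟩
  have hswap : swap i m * swap m j * swap i m = swap i j := by
    rw [swap_comm i m, swap_comm m j, swap_mul_swap_mul_swap hmj.ne' (hmj.trans' him).ne']
  have hj : swap i m j = j := swap_apply_of_ne_of_ne (him.trans hmj).ne' hmj.ne'
  have hi : swap m j i = i := swap_apply_of_ne_of_ne him.ne (him.trans hmj).ne
  have h₁ := invCount_mul_swap_lt w him hmi
  have h₂ := invCount_mul_swap_lt (w * swap i m) hmj (by simpa [hj] using hjm.trans hmi)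
  have h₃ := invCount_mul_swap_lt (w * swap i m * swap m j) him (by simpa [hi, hj] using hjm)
  rw [mul_assoc, mul_assoc, ← mul_assoc (swap i m), hswap] at h₃
  omega

theorem DescFrom.mono {k l : ℕ} {w : Perm (Fin n)} (hkl : k ≤ l) (hw : DescFrom n k w) :
    DescFrom n l w :=
  fun p q hp hpq => hw p q (hkl.trans hp) hpq

theorem descFrom_revPerm (k : ℕ) : DescFrom n k Fin.revPerm :=
  fun _ _ _ hpq => Fin.rev_lt_rev.mpr hpq

theorem DescFrom.of_kCover {k : ℕ} {u w : Perm (Fin n)} (h : kCover n k u w)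
    (hw : DescFrom n k w) : DescFrom n k u := by
  obtain ⟨i, j, hik, hkj, rfl, hlen⟩ := h
  have hij : i < j := by omega
  have hji := lt_of_invCount_eq_invCount_mul_swap_add_one hij hlen
  have hbetween := fun m (him : i < m) hmj =>
    not_between_of_invCount_eq_invCount_mul_swap_add_one him hmj hlen
  intro p q hkp hpq
  have hpi : p ≠ i := by omega
  have hqi : q ≠ i := by omega
  rcases eq_or_ne p j with rfl | hpj
  · simpa [swap_apply_of_ne_of_ne hqi hpq.ne'] using (hw _ _ hkp hpq).trans hji
  rcases eq_or_ne q j with rfl | hqj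
  · have hwp : w i ≤ w p := not_lt.mp fun hlt => hbetween p (by omega) hpq ⟨hw p _ hkp hpq, hlt⟩
    simpa [swap_apply_of_ne_of_ne hpi hpj] using hwp.lt_of_ne (w.injective.ne hpi.symm)
  · simpa [swap_apply_of_ne_of_ne, hpi, hpj, hqi, hqj] using hw p q hkp hpq

theorem DescFrom.of_reflTransGen_kCover {k : ℕ} {u w : Perm (Fin n)}
    (h : ReflTransGen (kCover n k) u w) (hw : DescFrom n k w) : DescFrom n k u :=
  h.head_induction_on hw fun hcover _ hc => hc.of_kCover hcover

end

theorem stmt2 (n : ℕ) (u : ℕ → Equiv.Perm (Fin n))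
    (h0 : u 0 = Fin.revPerm)
    (hchain : ∀ i, 1 ≤ i → i ≤ n - 1 →
      Relation.ReflTransGen (kCover n i) (u i) (u (i - 1))) :
    ∀ i, i ≤ n - 1 → DescFrom n i (u i) := by
  intro i hi
  induction i with
  | zero => exact h0 ▸ descFrom_revPerm 0
  | succ i ih =>
    exact DescFrom.of_reflTransGen_kCover (hchain (i + 1) (by omega) hi)
      ((ih (by omega)).mono (Nat.le_succ i))
end

section
/- Let w₁ ⋖ₖ w₂ ⋖ₖ ⋯ ⋖ₖ w_d be an increasing k-chain in Sₙ with w_m = w_{m+1}·t_{a_m, b_m} where a_m ≤ k < b_m. Then the indices b₁, …, b_{d-1} are pairwise distinct, and moreover for any j > k, w₁(j) ≠ w_d(j) if and only if j ∈ {b₁, …, b_{d-1}}. Consequently the chain length d-1 equals (n-k) minus the number of positions j > k with w₁(j) = w_d(j). -/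
/-!
Each step `v m ⋖ₖ v (m+1)` moves the value `v m (a m)` to the position `b m ≥ k`, and since the
length goes up, `(a m, b m)` is an ascent of `v m`: the new value at `b m` is smaller than the
old one. Positions `≥ k` are only touched as some `b m`, so along the chain the value at each of
them weakly decreases, strictly at every step that hits it. If `b m₁ = b m₂` with `m₁ < m₂`, the
value at that position just before step `m₂` is at most `v m₁ (a m₁)`, and it exceeds the value
`v m₂ (a m₂)` placed there, against the chain being increasing. The same monotonicity shows that
the value at `j ≥ k` differs between the ends of the chain exactly when `j` is some `b m`, and
the length formula follows by counting the positions `≥ k`.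
-/

open Finset Equiv

section Inversions

variable {n : ℕ}

/-- Swapping an ascent `x < y` creates the inversion `(x, y)`; every other inversion of `u` is
either still one of `u * swap x y`, or its image under `swap x y` is. -/
lemma invCount_lt_invCount_mul_swap_s4 (u : Perm (Fin n)) {x y : Fin n} (hxy : x < y)
    (hu : u x < u y) : invCount u < invCount (u * swap x y) := by
  set s := swap x y
  have hss : ∀ z, s (s z) = z := swap_apply_self x y
  set Iu := univ.filter fun p : Fin n × Fin n => p.1 < p.2 ∧ u p.2 < u p.1
  set Iw := univ.filter fun p : Fin n × Fin n => p.1 < p.2 ∧ u (s p.2) < u (s p.1)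
  let F : Fin n × Fin n → Fin n × Fin n := fun p => if p ∈ Iw then p else (s p.1, s p.2)
  have hxyIw : (x, y) ∈ Iw := by simpa [Iw, s] using ⟨hxy, hu⟩
  have hmaps : ∀ p ∈ Iu, F p ∈ Iw.erase (x, y) := by
    rintro ⟨p, q⟩ hpq
    simp only [Iu, mem_filter, mem_univ, true_and] at hpq
    by_cases hw : (p, q) ∈ Iw
    · simp only [F, if_pos hw, mem_erase, ne_eq, Prod.mk.injEq]
      exact ⟨fun ⟨hp, hq⟩ => (hp ▸ hq ▸ hu).not_gt hpq.2, hw⟩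
    · have hlt : s p < s q := by
        have hnot : ¬u (s q) < u (s p) := fun h => hw (mem_filter.2 ⟨mem_univ _, hpq.1, h⟩)
        -- `(p, q)` is `(y, z)` with `y < z` or `(z, x)` with `z < x`; any other placement of
        -- `x` and `y` contradicts `u x < u y`
        simp only [s, swap_apply_def] at hnot ⊢
        split_ifs at hnot ⊢ <;> grind
      have hF : F (p, q) = (s p, s q) := if_neg hw
      rw [hF, mem_erase, ne_eq, Prod.mk.injEq]
      refine ⟨fun ⟨hp, hq⟩ => ?_, ?_⟩
      · have hyx : s x < s y := by rw [← hp, ← hq, hss, hss]; exact hpq.1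
        simp only [s, swap_apply_left, swap_apply_right] at hyx
        exact hyx.not_gt hxy
      · simpa only [Iw, mem_filter, mem_univ, true_and, hss] using ⟨hlt, hpq.2⟩
  have hinj : Set.InjOn F Iu := by
    have hcross : ∀ q ∈ Iu, (s q.1, s q.2) ∈ Iu → q ∈ Iw := by
      intro q hq hsq
      simp only [Iu, Iw, mem_filter, mem_univ, true_and] at hq hsq ⊢
      exact ⟨hq.1, hsq.2⟩
    intro p hp q hq hpq
    by_cases hpw : p ∈ Iw <;> by_cases hqw : q ∈ Iw <;>
      simp only [F, hpw, hqw, if_true, if_false] at hpq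
    · exact hpq
    · exact absurd (hcross q hq (hpq ▸ hp)) hqw
    · exact absurd (hcross p hp (hpq ▸ hq)) hpw
    · exact Prod.ext (s.injective (congrArg Prod.fst hpq)) (s.injective (congrArg Prod.snd hpq))
  calc invCount u = #Iu := rfl
    _ ≤ #(Iw.erase (x, y)) := card_le_card_of_injOn F hmaps hinj
    _ < #Iw := card_erase_lt_of_mem hxyIw
    _ = invCount (u * s) := rfl

lemma apply_lt_apply_of_eq_mul_swap {u w : Perm (Fin n)} {x y : Fin n} (hxy : x < y)
    (hu : u = w * swap x y) (hlen : invCount u < invCount w) : u x < u y := by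
  by_contra! hyx
  have hw : w = u * swap x y := by rw [hu, mul_swap_mul_self]
  have hasc : w x < w y := by
    rw [hw, Perm.mul_apply, Perm.mul_apply, swap_apply_left, swap_apply_right]
    exact lt_of_le_of_ne hyx (u.injective.ne hxy.ne')
  have := invCount_lt_invCount_mul_swap_s4 w hxy hasc
  rw [← hu] at this
  omega

end Inversions

theorem Fin.card_filter_le_val (n k : ℕ) : #{j : Fin n | k ≤ (j : ℕ)} = n - k := by
  have hsplit := card_filter_add_card_filter_not (s := (univ : Finset (Fin n)))
    (fun j : Fin n => (j : ℕ) < k)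
  simp only [not_lt, card_univ, Fintype.card_fin, Fin.card_filter_val_lt] at hsplit
  omega

namespace IsIncKChain

variable {n k d : ℕ} {v : Fin (d + 1) → Perm (Fin n)} {a b : Fin d → Fin n}

lemma apply_succ_of_ne (h : IsIncKChain n k v a b) (m : Fin d) {j : Fin n}
    (hj : k ≤ (j : ℕ)) (hb : b m ≠ j) : v m.succ j = v m.castSucc j := by
  have hja : j ≠ a m := fun hja => by have := (h.1 m).1; omega
  rw [(h.1 m).2.2.1, Perm.mul_apply, swap_apply_of_ne_of_ne hja (Ne.symm hb)]

lemma apply_succ_b (h : IsIncKChain n k v a b) (m : Fin d) :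
    v m.succ (b m) = v m.castSucc (a m) := by
  rw [(h.1 m).2.2.1, Perm.mul_apply, swap_apply_left]

lemma apply_succ_lt (h : IsIncKChain n k v a b) (m : Fin d) :
    v m.succ (b m) < v m.castSucc (b m) := by
  obtain ⟨hak, hbk, hv, hlen⟩ := h.1 m
  rw [h.apply_succ_b]
  exact apply_lt_apply_of_eq_mul_swap (Fin.lt_def.2 (hak.trans_le hbk)) hv (by omega)

lemma apply_succ_le (h : IsIncKChain n k v a b) (m : Fin d) {j : Fin n} (hj : k ≤ (j : ℕ)) :
    v m.succ j ≤ v m.castSucc j := by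
  by_cases hb : b m = j
  · exact hb ▸ (h.apply_succ_lt m).le
  · exact (h.apply_succ_of_ne m hj hb).le

lemma antitone_apply (h : IsIncKChain n k v a b) {j : Fin n} (hj : k ≤ (j : ℕ)) :
    Antitone fun t => v t j :=
  Fin.antitone_iff_succ_le.2 fun m => h.apply_succ_le m hj

lemma injective (h : IsIncKChain n k v a b) : Function.Injective b := by
  refine .of_lt_imp_ne fun m₁ m₂ hlt hb => lt_irrefl (v m₂.castSucc (a m₂)) ?_
  calc v m₂.castSucc (a m₂) = v m₂.succ (b m₂) := (h.apply_succ_b m₂).symm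
    _ < v m₂.castSucc (b m₂) := h.apply_succ_lt m₂
    _ ≤ v m₁.succ (b m₁) := hb ▸ h.antitone_apply (h.1 m₂).2.1 (Fin.succ_le_castSucc_iff.2 hlt)
    _ = v m₁.castSucc (a m₁) := h.apply_succ_b m₁
    _ < v m₂.castSucc (a m₂) := h.2 m₁ m₂ hlt

lemma apply_zero_ne_apply_last_iff (h : IsIncKChain n k v a b) {j : Fin n}
    (hj : k ≤ (j : ℕ)) : v 0 j ≠ v (Fin.last d) j ↔ ∃ m, b m = j := by
  constructor
  · intro hne
    by_contra! hb
    have hmono : Monotone fun t => v t j :=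
      Fin.monotone_iff_le_succ.2 fun m => (h.apply_succ_of_ne m hj (hb m)).ge
    exact hne (le_antisymm (hmono (Fin.zero_le _)) (h.antitone_apply hj (Fin.zero_le _)))
  · rintro ⟨m, rfl⟩
    refine (lt_of_le_of_lt ?_ (lt_of_lt_of_le (h.apply_succ_lt m) ?_)).ne'
    · exact h.antitone_apply hj (Fin.le_last _)
    · exact h.antitone_apply hj (Fin.zero_le _)

lemma filter_apply_zero_eq_apply_last (h : IsIncKChain n k v a b) :
    univ.filter (fun j : Fin n => k ≤ (j : ℕ) ∧ v 0 j = v (Fin.last d) j) =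
      univ.filter (fun j : Fin n => k ≤ (j : ℕ)) \ univ.image b := by
  ext j
  simp only [mem_filter, mem_sdiff, mem_univ, true_and, mem_image]
  refine and_congr_right fun hj => ?_
  rw [← h.apply_zero_ne_apply_last_iff hj, not_not]

end IsIncKChain

theorem stmt4_general (n k d : ℕ)
    (v : Fin (d + 1) → Equiv.Perm (Fin n)) (a b : Fin d → Fin n)
    (h : IsIncKChain n k v a b) :
    Function.Injective b ∧
    (∀ j : Fin n, k ≤ (j : ℕ) →
      (v 0 j ≠ v (Fin.last d) j ↔ ∃ m : Fin d, b m = j)) ∧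
    d = (n - k) -
      (Finset.univ.filter
        (fun j : Fin n => k ≤ (j : ℕ) ∧ v 0 j = v (Fin.last d) j)).card := by
  refine ⟨h.injective, fun j hj => h.apply_zero_ne_apply_last_iff hj, ?_⟩
  have hsub : univ.image b ⊆ univ.filter (fun j : Fin n => k ≤ (j : ℕ)) := by
    simpa [subset_iff] using fun m => (h.1 m).2.1
  have hcard := card_le_card hsub
  rw [Fin.card_filter_le_val, card_image_of_injective _ h.injective, card_fin] at hcard
  rw [h.filter_apply_zero_eq_apply_last, card_sdiff_of_subset hsub, Fin.card_filter_le_val,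
    card_image_of_injective _ h.injective, card_fin]
  omega

theorem stmt4 (n k d : ℕ) (hk1 : 1 ≤ k) (hk2 : k ≤ n - 1)
    (v : Fin (d + 1) → Equiv.Perm (Fin n)) (a b : Fin d → Fin n)
    (h : IsIncKChain n k v a b) :
    Function.Injective b ∧
    (∀ j : Fin n, k ≤ (j : ℕ) →
      (v 0 j ≠ v (Fin.last d) j ↔ ∃ m : Fin d, b m = j)) ∧
    d = (n - k) -
      (Finset.univ.filter
        (fun j : Fin n => k ≤ (j : ℕ) ∧ v 0 j = v (Fin.last d) j)).card :=
  stmt4_general n k d v a b h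
end

section
/- Let k ∈ [n-1] and w ∈ Sₙ with w(k+1) > w(k+2) > ⋯ > w(n). Suppose there is an increasing k-chain from u to w, and suppose one of its covers swaps values a < b, with b ending at position i after the swap. Then: (1) b does not occur among the first k values of u, i.e., u⁻¹(b) > k; (2) for every c with a < c < b, u⁻¹(c) < i; (3) every value c with a < c < b is fixed throughout the chain, i.e., u⁻¹(c) = w⁻¹(c). -/
open Equiv Finset

lemma swap_mono {n : ℕ} {p q x y : Fin n} (hpq : (p:ℕ)+1 = q) (hxy : x < y)
    (hne : ¬(x = p ∧ y = q)) : Equiv.swap p q x < Equiv.swap p q y := by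
  have hne' : (x:ℕ) ≠ p ∨ (y:ℕ) ≠ q := by
    rw [not_and_or] at hne
    rcases hne with h | h
    · exact Or.inl (fun hc => h (Fin.ext hc))
    · exact Or.inr (fun hc => h (Fin.ext hc))
  rw [Equiv.swap_apply_def, Equiv.swap_apply_def]
  rw [Fin.lt_def] at hxy ⊢
  split_ifs with h1 h2 h3 h4 h5 h6 h7 <;>
    simp only [Fin.ext_iff] at * <;> omega

lemma invCount_mul_swap_adj {n : ℕ} (w : Equiv.Perm (Fin n)) (p q : Fin n)
    (hpq : (p:ℕ)+1 = q) (hw : w p < w q) :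
    invCount (w * Equiv.swap p q) = invCount w + 1 := by
  classical
  set s := Equiv.swap p q with hs
  have hplt : p < q := by rw [Fin.lt_def]; omega
  have hnepq : p ≠ q := ne_of_lt hplt
  set I : Equiv.Perm (Fin n) → Finset (Fin n × Fin n) :=
    fun σ => (Finset.univ.filter (fun z : Fin n × Fin n => z.1 < z.2 ∧ σ z.2 < σ z.1)) with hI
  have hmem : ∀ σ z, z ∈ I σ ↔ z.1 < z.2 ∧ σ z.2 < σ z.1 := by
    intro σ z; simp [hI]
  -- (p,q) is an inversion of w*s but not of w
  have h1 : (p, q) ∈ I (w * s) := by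
    rw [hmem]
    refine ⟨hplt, ?_⟩
    simp [hs, Equiv.Perm.mul_apply, Equiv.swap_apply_left, Equiv.swap_apply_right, hw]
  have h2 : (p, q) ∉ I w := by
    rw [hmem]; push_neg; intro _; exact le_of_lt hw
  have hbij : ((I (w * s)).erase (p, q)).card = (I w).card := by
    apply Finset.card_bij' (fun z _ => (s z.1, s z.2)) (fun z _ => (s z.1, s z.2))
    · intro z hz
      rw [Finset.mem_erase, hmem] at hz
      obtain ⟨hne, h12, hinv⟩ := hz
      rw [hmem]
      constructor
      · apply swap_mono hpq h12
        intro ⟨e1, e2⟩; exact hne (by rw [Prod.ext_iff]; exact ⟨e1, e2⟩)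
      · simpa [hs, Equiv.Perm.mul_apply] using hinv
    · intro z hz
      rw [hmem] at hz
      obtain ⟨h12, hinv⟩ := hz
      have hne : ¬(z.1 = p ∧ z.2 = q) := by
        rintro ⟨e1, e2⟩; rw [e1, e2] at hinv; exact absurd hw (not_lt.2 (le_of_lt hinv))
      rw [Finset.mem_erase, hmem]
      refine ⟨?_, swap_mono hpq h12 hne, ?_⟩
      · intro hcontra
        rw [Prod.ext_iff] at hcontra
        obtain ⟨e1, e2⟩ := hcontra
        simp only at e1 e2
        -- s z.1 = p means z.1 = q ; s z.2 = q means z.2 = p; then q < p contra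
        have : z.1 = q := by
          have := congrArg s e1; simpa [hs] using this
        have h2' : z.2 = p := by
          have := congrArg s e2; simpa [hs] using this
        rw [this, h2'] at h12
        exact absurd h12 (not_lt.2 (le_of_lt hplt))
      · simp [hs, Equiv.Perm.mul_apply, hinv]
    · intro z _; simp [hs]
    · intro z _; simp [hs]
  have hcard : (I (w * s)).card = ((I (w * s)).erase (p, q)).card + 1 := by
    rw [Finset.card_erase_of_mem h1]
    have : 0 < (I (w * s)).card := Finset.card_pos.2 ⟨_, h1⟩
    omega
  show (I (w * s)).card = (I w).card + 1
  omega

lemma invCount_mul_swap_aux {n : ℕ} : ∀ e : ℕ, ∀ (w : Equiv.Perm (Fin n)) (p q : Fin n),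
    p < q → (q:ℕ) - p = e → w p < w q →
    invCount (w * Equiv.swap p q) = invCount w + 1 +
      2 * (Finset.univ.filter (fun r : Fin n => p < r ∧ r < q ∧ w p < w r ∧ w r < w q)).card := by
  intro e
  induction e using Nat.strong_induction_on with
  | _ e IH =>
  intro w p q hpq he hw
  have hpq' : (p:ℕ) < q := hpq
  by_cases hadj : (q:ℕ) = p + 1
  · have hfe : (Finset.univ.filter
        (fun r : Fin n => p < r ∧ r < q ∧ w p < w r ∧ w r < w q)) = ∅ := by
      apply Finset.filter_eq_empty_iff.2
      intro x _
      rintro ⟨hx1, hx2, -, -⟩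
      have : (p:ℕ) < x := hx1
      have : (x:ℕ) < q := hx2
      omega
    rw [hfe]
    simp [invCount_mul_swap_adj w p q hadj.symm hw]
  · -- general step
    have hq2 : (p:ℕ) + 2 ≤ q := by omega
    have hrlt : (p:ℕ) + 1 < n := by have := q.is_lt; omega
    set r : Fin n := ⟨(p:ℕ)+1, hrlt⟩ with hrdef
    have hrval : (r:ℕ) = (p:ℕ)+1 := rfl
    have hpr : p < r := by rw [Fin.lt_def]; omega
    have hrq : r < q := by rw [Fin.lt_def, hrval]; omega
    have hqnp : q ≠ p := by intro h; rw [h] at hpq'; omega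
    have hqnr : q ≠ r := ne_of_gt hrq
    have hrnp : r ≠ p := ne_of_gt hpr
    have hdecomp : Equiv.swap p r * Equiv.swap r q * Equiv.swap p r = Equiv.swap p q := by
      have h := Equiv.swap_mul_swap_mul_swap (x := q) (y := r) (z := p) hqnr hqnp
      rwa [Equiv.swap_comm r p, Equiv.swap_comm q r] at h
    set w1 := w * Equiv.swap p r with hw1def
    have h1p : w1 p = w r := by
      rw [hw1def]; simp [Equiv.Perm.mul_apply]
    have h1r : w1 r = w p := by
      rw [hw1def]; simp [Equiv.Perm.mul_apply]
    have h1o : ∀ x : Fin n, x ≠ p → x ≠ r → w1 x = w x := by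
      intro x hx1 hx2
      rw [hw1def]; simp [Equiv.Perm.mul_apply, Equiv.swap_apply_of_ne_of_ne hx1 hx2]
    have h1q : w1 q = w q := h1o q hqnp hqnr
    have hw1back : w1 * Equiv.swap p r = w := by
      rw [hw1def, mul_assoc, Equiv.swap_mul_self, mul_one]
    set w2 := w1 * Equiv.swap r q with hw2def
    have h2p : w2 p = w1 p := by
      rw [hw2def]; simp [Equiv.Perm.mul_apply,
        Equiv.swap_apply_of_ne_of_ne (ne_of_lt hpr) (ne_of_lt hpq)]
    have h2r : w2 r = w1 q := by
      rw [hw2def]; simp [Equiv.Perm.mul_apply]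
    have htot : w2 * Equiv.swap p r = w * Equiv.swap p q := by
      rw [hw2def, hw1def, ← hdecomp]
      group
    -- IH on (r, q) for w1 (needs w1 r < w1 q, i.e. w p < w q ✓)
    have hIH := IH ((q:ℕ) - r) (by rw [hrval]; omega) w1 r q hrq rfl
      (by rw [h1r, h1q]; exact hw)
    rw [← hw2def] at hIH
    -- S1 card
    set S1 := Finset.univ.filter
      (fun x : Fin n => r < x ∧ x < q ∧ w1 r < w1 x ∧ w1 x < w1 q) with hS1
    set Sw := Finset.univ.filter
      (fun x : Fin n => p < x ∧ x < q ∧ w p < w x ∧ w x < w q) with hSw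
    have hS1alt : S1 = Finset.univ.filter
        (fun x : Fin n => r < x ∧ x < q ∧ w p < w x ∧ w x < w q) := by
      apply Finset.filter_congr
      intro x _
      by_cases hx1 : r < x
      · by_cases hx2 : x < q
        · have hxp : x ≠ p := by
            intro h; rw [h] at hx1; exact absurd (lt_trans hpr hx1) (lt_irrefl p)
          have hxr : x ≠ r := ne_of_gt hx1
          rw [h1o x hxp hxr, h1r, h1q]
        · simp [hx2]
      · simp [hx1]
    have hwrp : w r ≠ w p := fun h => hrnp (w.injective h)
    have hwrq : w r ≠ w q := fun h => hqnr.symm (w.injective h)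
    rcases lt_or_gt_of_ne hwrp with hc1 | hc1
    · -- Case 1 : w r < w p
      have hadj1 : invCount w = invCount w1 + 1 := by
        have := invCount_mul_swap_adj w1 p r rfl (by rw [h1p, h1r]; exact hc1)
        rwa [hw1back] at this
      have hadj3 : invCount (w2 * Equiv.swap p r) = invCount w2 + 1 := by
        apply invCount_mul_swap_adj w2 p r rfl
        rw [h2p, h2r, h1p, h1q]
        exact lt_trans hc1 hw
      have hSeq : Sw = S1 := by
        rw [hS1alt, hSw]
        apply Finset.filter_congr
        intro x _
        constructor
        · rintro ⟨hx1, hx2, hx3, hx4⟩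
          have hxr : x ≠ r := by
            intro h; rw [h] at hx3; exact absurd (lt_trans hc1 hx3) (lt_irrefl _)
          have : (p:ℕ) < x := hx1
          have hrx : r < x := by
            rw [Fin.lt_def, hrval]
            have : (x:ℕ) ≠ r := fun h => hxr (Fin.ext h)
            rw [hrval] at this
            omega
          exact ⟨hrx, hx2, hx3, hx4⟩
        · rintro ⟨hx1, hx2, hx3, hx4⟩
          exact ⟨lt_trans hpr hx1, hx2, hx3, hx4⟩
      rw [htot] at hadj3
      rw [hSeq]
      omega
    · -- w p < w r : subcases vs w q
      rcases lt_or_gt_of_ne hwrq with hc2 | hc2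
      · -- Case 3 : w p < w r < w q
        have hadj1 : invCount w1 = invCount w + 1 := by
          have := invCount_mul_swap_adj w p r rfl hc1
          rwa [← hw1def] at this
        have hadj3 : invCount (w2 * Equiv.swap p r) = invCount w2 + 1 := by
          apply invCount_mul_swap_adj w2 p r rfl
          rw [h2p, h2r, h1p, h1q]
          exact hc2
        have hrmem : r ∈ Sw := by
          rw [hSw, Finset.mem_filter]
          exact ⟨Finset.mem_univ r, hpr, hrq, hc1, hc2⟩
        have hSeq : Sw = insert r S1 := by
          rw [hS1alt, hSw]
          ext x
          simp only [Finset.mem_insert, Finset.mem_filter, Finset.mem_univ, true_and]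
          constructor
          · rintro ⟨hx1, hx2, hx3, hx4⟩
            by_cases hxr : x = r
            · exact Or.inl hxr
            · refine Or.inr ⟨?_, hx2, hx3, hx4⟩
              have : (p:ℕ) < x := hx1
              have : (x:ℕ) ≠ r := fun h => hxr (Fin.ext h)
              rw [Fin.lt_def, hrval]
              rw [hrval] at this
              omega
          · rintro (hxr | ⟨hx1, hx2, hx3, hx4⟩)
            · rw [hxr]; exact ⟨hpr, hrq, hc1, hc2⟩
            · exact ⟨lt_trans hpr hx1, hx2, hx3, hx4⟩
        have hrnotS1 : r ∉ S1 := by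
          rw [hS1]
          simp only [Finset.mem_filter]
          rintro ⟨-, hx1, -⟩
          exact absurd hx1 (lt_irrefl r)
        have hcard : Sw.card = S1.card + 1 := by
          rw [hSeq, Finset.card_insert_of_notMem hrnotS1]
        rw [htot] at hadj3
        omega
      · -- Case 2 : w p < w q < w r
        have hadj1 : invCount w1 = invCount w + 1 := by
          have := invCount_mul_swap_adj w p r rfl hc1
          rwa [← hw1def] at this
        have hadj3 : invCount w2 = invCount (w2 * Equiv.swap p r) + 1 := by
          have hback : (w2 * Equiv.swap p r) * Equiv.swap p r = w2 := by
            rw [mul_assoc, Equiv.swap_mul_self, mul_one]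
          have := invCount_mul_swap_adj (w2 * Equiv.swap p r) p r rfl ?_
          · rwa [hback] at this
          · have e1 : (w2 * Equiv.swap p r) p = w2 r := by
              simp [Equiv.Perm.mul_apply]
            have e2 : (w2 * Equiv.swap p r) r = w2 p := by
              simp [Equiv.Perm.mul_apply]
            rw [e1, e2, h2p, h2r, h1p, h1q]
            exact hc2
        have hSeq : Sw = S1 := by
          rw [hS1alt, hSw]
          apply Finset.filter_congr
          intro x _
          constructor
          · rintro ⟨hx1, hx2, hx3, hx4⟩
            have hxr : x ≠ r := by
              intro h; rw [h] at hx4; exact absurd (lt_trans hc2 hx4) (lt_irrefl _)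
            have : (p:ℕ) < x := hx1
            have : (x:ℕ) ≠ r := fun h => hxr (Fin.ext h)
            rw [hrval] at this
            refine ⟨?_, hx2, hx3, hx4⟩
            rw [Fin.lt_def, hrval]
            omega
          · rintro ⟨hx1, hx2, hx3, hx4⟩
            exact ⟨lt_trans hpr hx1, hx2, hx3, hx4⟩
        rw [htot] at hadj3
        rw [hSeq]
        omega

lemma invCount_mul_swap {n : ℕ} (w : Equiv.Perm (Fin n)) (p q : Fin n)
    (hpq : p < q) (hw : w p < w q) :
    invCount (w * Equiv.swap p q) = invCount w + 1 +
      2 * (Finset.univ.filter (fun r : Fin n => p < r ∧ r < q ∧ w p < w r ∧ w r < w q)).card :=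
  invCount_mul_swap_aux ((q:ℕ) - p) w p q hpq rfl hw

lemma cover_facts {n : ℕ} (wB vS : Equiv.Perm (Fin n)) (p q : Fin n) (hpq : p < q)
    (hstep : vS = wB * Equiv.swap p q) (hinv : invCount wB = invCount vS + 1) :
    vS p < vS q ∧ ∀ r : Fin n, p < r → r < q → ¬(vS p < vS r ∧ vS r < vS q) := by
  have hback : vS * Equiv.swap p q = wB := by
    rw [hstep, mul_assoc, Equiv.swap_mul_self, mul_one]
  have hlt : vS p < vS q := by
    by_contra hn
    push_neg at hn
    have hne : vS q ≠ vS p := fun h => (ne_of_lt hpq) (vS.injective h.symm)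
    have hlt' : vS q < vS p := lt_of_le_of_ne hn hne
    have hwp : wB p = vS q := by rw [hstep]; simp [Equiv.Perm.mul_apply]
    have hwq : wB q = vS p := by rw [hstep]; simp [Equiv.Perm.mul_apply]
    have := invCount_mul_swap wB p q hpq (by rw [hwp, hwq]; exact hlt')
    have hid : wB * Equiv.swap p q = vS := hstep.symm
    rw [hid] at this
    omega
  have hform := invCount_mul_swap vS p q hpq hlt
  rw [hback] at hform
  have hcard : (Finset.univ.filter
      (fun r : Fin n => p < r ∧ r < q ∧ vS p < vS r ∧ vS r < vS q)).card = 0 := by omega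
  refine ⟨hlt, ?_⟩
  intro r hr1 hr2 ⟨hr3, hr4⟩
  have : r ∈ Finset.univ.filter
      (fun r : Fin n => p < r ∧ r < q ∧ vS p < vS r ∧ vS r < vS q) := by
    rw [Finset.mem_filter]
    exact ⟨Finset.mem_univ r, hr1, hr2, hr3, hr4⟩
  rw [Finset.card_eq_zero] at hcard
  rw [hcard] at this
  exact absurd this (Finset.notMem_empty r)

lemma down_induct (P : ℕ → Prop) (T : ℕ) (base : P T)
    (step : ∀ t, t < T → P (t+1) → P t) : ∀ t, t ≤ T → P t := by
  intro t ht
  have h : ∀ j, j ≤ T → P (T - j) := by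
    intro j
    induction j with
    | zero => intro _; simpa using base
    | succ j ih =>
      intro hj
      have h1 : T - (j+1) + 1 = T - j := by omega
      apply step _ (by omega)
      rw [h1]
      exact ih (by omega)
  have := h (T - t) (by omega)
  rwa [Nat.sub_sub_self ht] at this


theorem stmt5 (n k d : ℕ) (hk1 : 1 ≤ k) (hk2 : k ≤ n - 1)
    (w u : Equiv.Perm (Fin n)) (hw : DescFrom n k w)
    (v : Fin (d + 1) → Equiv.Perm (Fin n)) (a b : Fin d → Fin n)
    (hchain : IsIncKChain n k v a b) (hu : v 0 = u) (hwend : v (Fin.last d) = w)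
    (m : Fin d) :
    k ≤ (u.symm (v m.succ (a m)) : ℕ) ∧
    (∀ c : Fin n, v m.succ (b m) < c → c < v m.succ (a m) →
      (u.symm c : ℕ) < (a m : ℕ) ∧ u.symm c = w.symm c) := by
  obtain ⟨hfacts, hmono⟩ := hchain
  have hd : 0 < d := m.pos
  set V : ℕ → Equiv.Perm (Fin n) := fun t => v ⟨min t d, by omega⟩ with hVdef
  set A : ℕ → Fin n := fun t => a ⟨min t (d-1), by omega⟩ with hAdef
  set B : ℕ → Fin n := fun t => b ⟨min t (d-1), by omega⟩ with hBdef
  have hVt : ∀ (t : ℕ) (ht : t ≤ d), V t = v ⟨t, by omega⟩ := by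
    intro t ht
    show v ⟨min t d, by omega⟩ = v ⟨t, by omega⟩
    exact congrArg v (Fin.mk_eq_mk.2 (by omega))
  have hAt : ∀ (t : ℕ) (ht : t < d), A t = a ⟨t, ht⟩ := by
    intro t ht
    show a ⟨min t (d-1), by omega⟩ = a ⟨t, ht⟩
    exact congrArg a (Fin.mk_eq_mk.2 (by omega))
  have hBt : ∀ (t : ℕ) (ht : t < d), B t = b ⟨t, ht⟩ := by
    intro t ht
    show b ⟨min t (d-1), by omega⟩ = b ⟨t, ht⟩
    exact congrArg b (Fin.mk_eq_mk.2 (by omega))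
  have hVc : ∀ (t : ℕ) (ht : t < d), V t = v (Fin.castSucc ⟨t, ht⟩) := by
    intro t ht
    rw [Fin.castSucc_mk]
    exact hVt t (le_of_lt ht)
  have hVs : ∀ (t : ℕ) (ht : t < d), V (t+1) = v (Fin.succ ⟨t, ht⟩) := by
    intro t ht
    rw [Fin.succ_mk]
    exact hVt (t+1) (by omega)
  have hu0 : V 0 = u := by
    rw [hVt 0 (by omega), ← hu]
    congr 1
  have hwd : V d = w := by
    rw [hVt d le_rfl, ← hwend]
    congr 1
  have HA : ∀ t, t < d → (A t : ℕ) < k := by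
    intro t ht; rw [hAt t ht]; exact (hfacts ⟨t, ht⟩).1
  have HB : ∀ t, t < d → k ≤ (B t : ℕ) := by
    intro t ht; rw [hBt t ht]; exact (hfacts ⟨t, ht⟩).2.1
  have HV : ∀ t (ht : t < d), V t = V (t+1) * Equiv.swap (A t) (B t) := by
    intro t ht
    rw [hVc t ht, hVs t ht, hAt t ht, hBt t ht]
    exact (hfacts ⟨t, ht⟩).2.2.1
  have HI : ∀ t (ht : t < d), invCount (V (t+1)) = invCount (V t) + 1 := by
    intro t ht
    rw [hVc t ht, hVs t ht]
    exact (hfacts ⟨t, ht⟩).2.2.2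
  have HM : ∀ t t', t < t' → t' < d → V t (A t) < V t' (A t') := by
    intro t t' htt' ht'
    have ht : t < d := lt_trans htt' ht'
    rw [hVc t ht, hVc t' ht', hAt t ht, hAt t' ht']
    exact hmono ⟨t, ht⟩ ⟨t', ht'⟩ htt'
  have HABf : ∀ t, t < d → A t < B t := by
    intro t ht
    rw [Fin.lt_def]
    have := HA t ht; have := HB t ht; omega
  have HCF := fun (t : ℕ) (ht : t < d) =>
    cover_facts (V (t+1)) (V t) (A t) (B t) (HABf t ht) (HV t ht) (HI t ht)
  have Hval1 : ∀ t (ht : t < d), V t (A t) = V (t+1) (B t) := by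
    intro t ht; rw [HV t ht]; simp [Equiv.Perm.mul_apply]
  have Hval2 : ∀ t (ht : t < d), V t (B t) = V (t+1) (A t) := by
    intro t ht; rw [HV t ht]; simp [Equiv.Perm.mul_apply]
  have Hpos : ∀ t (ht : t < d) (x : Fin n),
      (V t).symm x = Equiv.swap (A t) (B t) ((V (t+1)).symm x) := by
    intro t ht x
    rw [Equiv.symm_apply_eq, HV t ht]
    simp [Equiv.Perm.mul_apply]
  have Hpos' : ∀ t (ht : t < d) (x : Fin n),
      (V (t+1)).symm x = Equiv.swap (A t) (B t) ((V t).symm x) := by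
    intro t ht x
    rw [Hpos t ht x, Equiv.swap_apply_self]
  have key : ∀ M : ℕ, ∀ mm : Fin d, (mm : ℕ) = M →
      (k ≤ (u.symm (v mm.succ (a mm)) : ℕ) ∧
      (∀ c : Fin n, v mm.succ (b mm) < c → c < v mm.succ (a mm) →
        (u.symm c : ℕ) < (a mm : ℕ) ∧ u.symm c = w.symm c)) := by
    intro M
    induction M using Nat.strong_induction_on with
    | _ M IH =>
    intro mm hmval
    have hmd : M < d := hmval ▸ mm.isLt
    have hmeq : mm = ⟨M, hmd⟩ := Fin.ext hmval
    set s : Fin n := V M (A M) with hsdef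
    set L : Fin n := V M (B M) with hLdef
    have hsL : s < L := (HCF M hmd).1
    have hss : V (M+1) (B M) = s := (Hval1 M hmd).symm
    have hLs : V (M+1) (A M) = L := (Hval2 M hmd).symm
    -- value L stays at positions ≥ k at all times t ≤ M
    have PA : ∀ t, t ≤ M → k ≤ ((V t).symm L : ℕ) := by
      apply down_induct
      · have : (V M).symm L = B M := by rw [hLdef, Equiv.symm_apply_apply]
        rw [this]; exact HB M hmd
      · intro t htM hIH
        have htd : t < d := lt_trans htM hmd
        rw [Hpos t htd L]
        set P1 := (V (t+1)).symm L with hP1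
        by_cases h1 : P1 = A t
        · rw [h1, Equiv.swap_apply_left]; exact HB t htd
        · by_cases h2 : P1 = B t
          · exfalso
            have hVtA : V t (A t) = L := by
              rw [Hval1 t htd, ← h2, hP1, Equiv.apply_symm_apply]
            have hlt := HM t M htM hmd
            rw [hVtA, ← hsdef] at hlt
            exact (lt_asymm hsL) hlt
          · rw [Equiv.swap_apply_of_ne_of_ne h1 h2]; exact hIH
    have goal1 : k ≤ (u.symm (v mm.succ (a mm)) : ℕ) := by
      have h1 : v mm.succ (a mm) = L := by
        rw [hmeq, ← hVs M hmd, ← hAt M hmd]; exact hLs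
      rw [h1, ← hu0]
      exact PA 0 (Nat.zero_le M)
    -- value s sits at position B M for all times in [M+1, d]
    have PC : ∀ t, M+1 ≤ t → t ≤ d → (V t).symm s = B M := by
      intro t ht
      induction t, ht using Nat.le_induction with
      | base => intro _; rw [← hss, Equiv.symm_apply_apply]
      | succ t ht ih =>
        intro htd1
        have htd : t < d := by omega
        have ihh := ih (by omega)
        rw [Hpos' t htd s, ihh]
        have hne1 : B M ≠ A t := by
          intro h
          have hBM := HB M hmd
          rw [h] at hBM
          have := HA t htd
          omega
        by_cases h2 : B M = B t
        · exfalso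
          have hvb : V t (B t) = s := by
            rw [← h2, ← ihh]; exact Equiv.apply_symm_apply _ _
          have h3 := (HCF t htd).1
          have h4 := HM M t (by omega) htd
          rw [← hsdef] at h4
          rw [hvb] at h3
          exact (lt_asymm h3) h4
        · rw [Equiv.swap_apply_of_ne_of_ne hne1 h2]
    have HCw : w.symm s = B M := by
      rw [← hwd]; exact PC d (by omega) le_rfl
    have hwBM : w (B M) = s := by
      rw [← HCw]; exact Equiv.apply_symm_apply _ _
    -- positions beyond B M hold values < s at all times in [M, d]
    have PD : ∀ t, t ≤ d → (M ≤ t → ∀ q : Fin n, (B M : ℕ) < (q : ℕ) → V t q < s) := by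
      apply down_induct (fun t => M ≤ t → ∀ q : Fin n, (B M : ℕ) < (q : ℕ) → V t q < s) d
      · intro _ q hq
        rw [hwd, ← hwBM]
        exact hw (B M) q (HB M hmd) (by rw [Fin.lt_def]; exact hq)
      · intro t htd hind hMt q hq
        have hq_ne_A : q ≠ A t := by
          intro h
          have := HA t htd
          have hBMk := HB M hmd
          have hv := congrArg Fin.val h
          omega
        by_cases hqB : q = B t
        · exfalso
          rcases Nat.eq_or_lt_of_le hMt with hMt' | hMt'
          · rw [← hMt'] at hqB
            have hv := congrArg Fin.val hqB
            omega
          · have h5 := hind (by omega) q hq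
            rw [hqB, ← Hval1 t htd] at h5
            have h6 := HM M t hMt' htd
            rw [← hsdef] at h6
            exact (lt_asymm h6) h5
        · have hfix : V t q = V (t+1) q := by
            rw [HV t htd]
            simp [Equiv.Perm.mul_apply, Equiv.swap_apply_of_ne_of_ne hq_ne_A hqB]
          rw [hfix]
          exact hind (by omega) q hq
    -- interval values sit strictly left of A M at time M
    have LemE : ∀ c : Fin n, s < c → c < L → ((V M).symm c : ℕ) < (A M : ℕ) := by
      intro c hc1 hc2
      have hVrc : V M ((V M).symm c) = c := Equiv.apply_symm_apply _ _
      have hne_A : (V M).symm c ≠ A M := by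
        intro h
        rw [h] at hVrc
        exact (ne_of_lt hc1) hVrc
      have hne_B : (V M).symm c ≠ B M := by
        intro h
        rw [h] at hVrc
        exact (ne_of_gt hc2) hVrc
      rcases lt_trichotomy (((V M).symm c : ℕ)) ((A M : ℕ)) with h | h | h
      · exact h
      · exact absurd (Fin.ext h) hne_A
      · exfalso
        rcases lt_trichotomy (((V M).symm c : ℕ)) ((B M : ℕ)) with h' | h' | h'
        · refine (HCF M hmd).2 ((V M).symm c) (by rw [Fin.lt_def]; exact h)
            (by rw [Fin.lt_def]; exact h') ⟨?_, ?_⟩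
          · rw [hVrc]; exact hc1
          · rw [hVrc]; exact hc2
        · exact hne_B (Fin.ext h')
        · have := PD M (le_of_lt hmd) le_rfl ((V M).symm c) h'
          rw [hVrc] at this
          exact (lt_asymm hc1) this
    -- interval values are fixed at all times t ≤ M
    have LemF : ∀ c : Fin n, s < c → c < L → ∀ t, t ≤ M → (V t).symm c = (V M).symm c := by
      intro c hc1 hc2
      apply down_induct (fun t => (V t).symm c = (V M).symm c) M rfl
      intro t htM hind
      have htd : t < d := lt_trans htM hmd
      rw [Hpos t htd c, hind]
      by_cases h1 : (V M).symm c = A t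
      · exfalso
        have hc : V (t+1) (A t) = c := by
          rw [← h1, ← hind]; exact Equiv.apply_symm_apply _ _
        have hIHt := IH t htM ⟨t, htd⟩ rfl
        have hsmall : v (⟨t, htd⟩ : Fin d).succ (b ⟨t, htd⟩) < s := by
          rw [← hVs t htd, ← hBt t htd, ← Hval1 t htd]
          have h9 := HM t M htM hmd
          rw [← hsdef] at h9
          exact h9
        have hbig : s < v (⟨t, htd⟩ : Fin d).succ (a ⟨t, htd⟩) := by
          rw [← hVs t htd, ← hAt t htd, hc]
          exact hc1
        obtain ⟨hus, husw⟩ := hIHt.2 s hsmall hbig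
        have h5 : (u.symm s : ℕ) = (B M : ℕ) := by rw [husw, HCw]
        have h6 : ((a ⟨t, htd⟩ : Fin n) : ℕ) < k := by
          rw [← hAt t htd]; exact HA t htd
        have h7 := HB M hmd
        omega
      · by_cases h2 : (V M).symm c = B t
        · exfalso
          have hc : V (t+1) (B t) = c := by
            rw [← h2, ← hind]; exact Equiv.apply_symm_apply _ _
          rw [← Hval1 t htd] at hc
          have h9 := HM t M htM hmd
          rw [← hsdef, hc] at h9
          exact (lt_asymm hc1) h9
        · rw [Equiv.swap_apply_of_ne_of_ne h1 h2]
    -- interval values are fixed at all times t in [M, d]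
    have LemG : ∀ t, M ≤ t → t ≤ d → ∀ c : Fin n, s < c → c < L →
        (V t).symm c = (V M).symm c := by
      intro t ht
      induction t, ht using Nat.le_induction with
      | base => intro _ c _ _; rfl
      | succ t ht ihg =>
        intro htd1 c hc1 hc2
        have htd : t < d := by omega
        have ihc := ihg (by omega) c hc1 hc2
        rw [Hpos' t htd c, ihc]
        have hrcA := LemE c hc1 hc2
        have hAk := HA M hmd
        have hne2 : (V M).symm c ≠ B t := by
          intro h
          have := HB t htd
          have hv := congrArg Fin.val h
          omega
        by_cases h1 : (V M).symm c = A t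
        · exfalso
          have hct : V t (A t) = c := by
            rw [← h1, ← ihc]; exact Equiv.apply_symm_apply _ _
          rcases Nat.eq_or_lt_of_le ht with hMt | hMt
          · rw [← hMt] at hct
            exact (ne_of_lt hc1) hct
          · -- M < t ; value L stays at position A M during [M+1, t]
            have hbpos : ∀ t', M+1 ≤ t' → t' ≤ t → (V t').symm L = A M := by
              intro t' ht'
              induction t', ht' using Nat.le_induction with
              | base => intro _; rw [← hLs, Equiv.symm_apply_apply]
              | succ t'' ht'' ihb =>
                intro ht''t
                have ht''d : t'' < d := by omega
                have ihb' := ihb (by omega)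
                rw [Hpos' t'' ht''d L, ihb']
                have hBne : A M ≠ B t'' := by
                  intro h
                  have := HB t'' ht''d
                  have hv := congrArg Fin.val h
                  omega
                by_cases hA : A M = A t''
                · exfalso
                  have hvL : V t'' (A t'') = L := by
                    rw [← hA, ← ihb']; exact Equiv.apply_symm_apply _ _
                  have hlt1 := HM t'' t (by omega) htd
                  rw [hvL, hct] at hlt1
                  exact (lt_asymm hc2) hlt1
                · rw [Equiv.swap_apply_of_ne_of_ne hA hBne]
            have hbt : V t (A M) = L := by
              have h8 := hbpos t (by omega) le_rfl
              rw [← h8]; exact Equiv.apply_symm_apply _ _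
            rcases lt_trichotomy (V t (B t)) L with hcmp | hcmp | hcmp
            · -- L_t < L : L_t is an interval value at a position ≥ k
              have hint1 : s < V t (B t) := by
                have h9 := (HCF t htd).1
                rw [hct] at h9
                exact lt_trans hc1 h9
              have h10 := ihg (by omega) (V t (B t)) hint1 hcmp
              rw [Equiv.symm_apply_apply] at h10
              have hlow := LemE (V t (B t)) hint1 hcmp
              rw [← h10] at hlow
              have := HB t htd
              omega
            · -- L_t = L : impossible
              have h11 : (V t).symm L = B t := by
                rw [← hcmp]; exact Equiv.symm_apply_apply _ _
              have h12 := hbpos t (by omega) le_rfl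
              rw [h11] at h12
              have hv := congrArg Fin.val h12
              have := HB t htd
              omega
            · -- L < L_t : contradicts the cover condition at t
              refine (HCF t htd).2 (A M) ?_ ?_ ⟨?_, ?_⟩
              · rw [Fin.lt_def]
                have hv := congrArg Fin.val h1
                omega
              · rw [Fin.lt_def]
                have := HB t htd
                omega
              · rw [hct, hbt]; exact hc2
              · rw [hbt]; exact hcmp
        · rw [Equiv.swap_apply_of_ne_of_ne h1 hne2]
    refine ⟨goal1, ?_⟩
    intro c hcl hcr
    rw [hmeq, ← hVs M hmd, ← hBt M hmd, hss] at hcl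
    rw [hmeq, ← hVs M hmd, ← hAt M hmd, hLs] at hcr
    have h1 := LemF c hcl hcr 0 (Nat.zero_le M)
    have h2 := LemE c hcl hcr
    constructor
    · have hgoal : ((u.symm c : Fin n) : ℕ) < (A M : ℕ) := by
        rw [← hu0, h1]; exact h2
      rw [hmeq, ← hAt M hmd]
      exact hgoal
    · have h3 := LemG d (le_of_lt hmd) le_rfl c hcl hcr
      rw [← hu0, ← hwd, h1, h3]
  exact key (m : ℕ) m rfl
end

section
/- Suppose there exists a chain of permutations w = v₀, v₁, …, v_d = w₀ in Sₙ (w₀ the longest element) such that for each i there is an increasing k_i-chain from v_{i-1} to v_i, where k₁, …, k_d are distinct elements of [n-1]. Let k = min{k₁, …, k_d}. Then w(i) = n + 1 - i for all i ∈ [k-1]. -/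
/-!
Call `p` a right-to-left maximum of `v` if `v q < v p` for all `q > p`; in `w₀` every position is
one. A Bruhat cover `u ⋖ u * (a b)` with `a < b` has `u a < u b` and no value strictly between
them at a position strictly between `a` and `b` (otherwise the length would jump by at least 3),
so passing from `u * (a b)` down to `u` keeps every right-to-left maximum other than `a`.

Along an increasing `κ`-chain read backwards, the swapped smaller values decrease, so each stays
below the values at the untouched right-to-left maxima left of the cut `κ`. If the left position
`a` of a cover were such a maximum other than the last one before the cut, the position just
before the cut would carry a value strictly between `u a` and `u b`. Hence a `κ`-chain destroys
right-to-left maxima only at positions already destroyed or at the 1-indexed position `κ`, and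
after all `d` chains every position before `min kᵢ` is still a right-to-left maximum of `w`,
which forces `w(i) = n + 1 - i` there.
-/

open Finset Equiv

namespace Equiv.Perm

variable {n : ℕ}

section Inversions

variable (u : Perm (Fin n)) {a b c : Fin n}

theorem invCount_mul_swap :
    invCount (u * swap a b) =
      #{x : Fin n × Fin n | swap a b x.1 < swap a b x.2 ∧ u x.2 < u x.1} :=
  card_equiv ((swap a b).prodCongr (swap a b)) fun x => by
    rw [mem_filter, mem_filter]
    simp

theorem apply_swap_lt_apply_swap (hab : a < b) (hu : u a < u b) {p q : Fin n} (hpq : p < q)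
    (huqp : u q < u p) (ht : swap a b q < swap a b p) :
    u (swap a b q) < u (swap a b p) := by
  simp only [swap_apply_def] at *
  split_ifs at * <;> grind

/-- Inversions of `u` are injected into those of `u * swap a b` (counted as in
`invCount_mul_swap`) by fixing the common ones and moving the others by `swap a b`; the pairs in
`S` are missed by this injection. -/
theorem invCount_add_card_le_invCount_mul_swap (hab : a < b) (hu : u a < u b)
    (S : Finset (Fin n × Fin n))
    (hS : ∀ x ∈ S, x.2 < x.1 ∧ swap a b x.1 < swap a b x.2 ∧ u x.2 < u x.1 ∧
      u (swap a b x.1) < u (swap a b x.2)) :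
    invCount u + #S ≤ invCount (u * swap a b) := by
  set t := swap a b
  set A : Finset (Fin n × Fin n) := {x | x.1 < x.2 ∧ u x.2 < u x.1}
  set B : Finset (Fin n × Fin n) := {x | t x.1 < t x.2 ∧ u x.2 < u x.1}
  set ψ : Fin n × Fin n → Fin n × Fin n := fun x => if x ∈ B then x else (t x.1, t x.2)
  have hA : ∀ {x}, x ∈ A ↔ x.1 < x.2 ∧ u x.2 < u x.1 := by simp [A]
  have hB : ∀ {x}, x ∈ B ↔ t x.1 < t x.2 ∧ u x.2 < u x.1 := by simp [B]
  have hmoved : ∀ x ∈ A, x ∉ B → t x.2 < t x.1 ∧ (t x.1, t x.2) ∈ B := by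
    rintro ⟨p, q⟩ hx hxB
    rw [hA] at hx
    have htqp : t q < t p :=
      lt_of_le_of_ne (not_lt.mp fun h => hxB (hB.mpr ⟨h, hx.2⟩)) fun h =>
        hx.1.ne' (t.injective h)
    exact ⟨htqp, hB.mpr ⟨by simpa [t] using hx.1,
      apply_swap_lt_apply_swap u hab hu hx.1 hx.2 htqp⟩⟩
  have hψA : ∀ x ∈ A, ψ x ∈ B := by
    intro x hx
    by_cases hxB : x ∈ B
    · simp [ψ, hxB]
    · simpa [ψ, hxB] using (hmoved x hx hxB).2
  have hinj : Set.InjOn ψ A := by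
    intro x hx y hy hxy
    by_cases hxB : x ∈ B <;> by_cases hyB : y ∈ B <;>
      simp only [ψ, hxB, hyB, if_true, if_false] at hxy
    · exact hxy
    · subst hxy
      exact absurd (hA.mp hx).1 (hmoved y hy hyB).1.not_gt
    · subst hxy
      exact absurd (hA.mp hy).1 (hmoved x hx hxB).1.not_gt
    · simp only [Prod.mk.injEq, EmbeddingLike.apply_eq_iff_eq] at hxy
      exact Prod.ext hxy.1 hxy.2
  have hdisj : _root_.Disjoint (A.image ψ) S := by
    rw [disjoint_left]
    rintro _ hψ hψS
    obtain ⟨x, hx, rfl⟩ := mem_image.mp hψ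
    by_cases hxB : x ∈ B <;> simp only [ψ, hxB, if_true, if_false] at hψS
    · exact absurd (hA.mp hx).1 (hS x hψS).1.not_gt
    · have := (hS _ hψS).2.2.2
      simp only [t, swap_apply_self] at this
      exact absurd (hA.mp hx).2 this.not_gt
  calc invCount u + #S = #(A.image ψ ∪ S) := by
        rw [card_union_of_disjoint hdisj, card_image_of_injOn hinj]; rfl
    _ ≤ #B := card_le_card (union_subset (image_subset_iff.mpr hψA) fun x hx =>
        hB.mpr ⟨(hS x hx).2.1, (hS x hx).2.2.1⟩)
    _ = invCount (u * swap a b) := (invCount_mul_swap u).symm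

theorem invCount_lt_invCount_mul_swap (hab : a < b) (hu : u a < u b) :
    invCount u < invCount (u * swap a b) := by
  have := invCount_add_card_le_invCount_mul_swap u hab hu {(b, a)} (by simpa using ⟨hab, hu⟩)
  simpa using this

theorem invCount_add_three_le_invCount_mul_swap (hac : a < c) (hcb : c < b)
    (hac' : u a < u c) (hcb' : u c < u b) :
    invCount u + 3 ≤ invCount (u * swap a b) := by
  have hab := hac.trans hcb
  have hu := hac'.trans hcb'
  have hS : #{(b, a), (b, c), (c, a)} = 3 :=
    card_eq_three.mpr ⟨_, _, _, by simp [hac.ne], by simp [hcb.ne'], by simp [hcb.ne'], rfl⟩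
  have := invCount_add_card_le_invCount_mul_swap u hab hu {(b, a), (b, c), (c, a)}
  rw [hS] at this
  exact this (by simp [swap_apply_of_ne_of_ne, hac.ne', hcb.ne, hac, hcb, hac', hcb', hab, hu])

theorem apply_lt_apply_of_invCount_mul_swap (hab : a < b)
    (hcov : invCount (u * swap a b) = invCount u + 1) : u a < u b := by
  refine lt_of_le_of_ne (not_lt.mp fun hba => ?_) (u.injective.ne hab.ne)
  have := invCount_lt_invCount_mul_swap (u * swap a b) hab (by simpa using hba)
  rw [mul_swap_mul_self] at this
  omega

theorem apply_lt_of_invCount_mul_swap (hcov : invCount (u * swap a b) = invCount u + 1)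
    (hac : a < c) (hcb : c < b) (hac' : u a < u c) : u b < u c := by
  refine lt_of_le_of_ne (not_lt.mp fun hcb' => ?_) (u.injective.ne hcb.ne')
  have := invCount_add_three_le_invCount_mul_swap u hac hcb hac' hcb'
  omega

end Inversions

def IsRightToLeftMax (v : Perm (Fin n)) (p : Fin n) : Prop :=
  ∀ q, p < q → v q < v p

/-- `S` is a set of 1-indexed positions: the 0-indexed position `p` is exempt iff `p + 1 ∈ S`. -/
def RightToLeftMaxOutside (S : Set ℕ) (v : Perm (Fin n)) : Prop :=
  ∀ p : Fin n, (p : ℕ) + 1 ∉ S → v.IsRightToLeftMax p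

theorem RightToLeftMaxOutside.mono {S T : Set ℕ} {v : Perm (Fin n)} (hST : S ⊆ T)
    (h : RightToLeftMaxOutside S v) : RightToLeftMaxOutside T v :=
  fun p hp => h p fun hS => hp (hST hS)

theorem rightToLeftMaxOutside_revPerm (S : Set ℕ) :
    RightToLeftMaxOutside S (Fin.revPerm : Perm (Fin n)) :=
  fun _ _ _ hpq => Fin.rev_lt_rev.mpr hpq

theorem apply_eq_rev_of_isRightToLeftMax {v : Perm (Fin n)} {p : Fin n}
    (h : ∀ q ≤ p, v.IsRightToLeftMax q) : v p = Fin.rev p := by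
  have hright : #(Ioi p) ≤ #(Iio (v p)) :=
    card_le_card_of_injOn v (fun q hq => by
      rw [coe_Ioi, Set.mem_Ioi] at hq
      simpa using h p le_rfl q hq) v.injective.injOn
  have hleft : #(Iio p) ≤ #(Ioi (v p)) :=
    card_le_card_of_injOn v (fun q hq => by
      rw [coe_Iio, Set.mem_Iio] at hq
      simpa using h q hq.le p hq) v.injective.injOn
  rw [Fin.card_Ioi, Fin.card_Iio] at hright
  rw [Fin.card_Iio, Fin.card_Ioi] at hleft
  ext
  rw [Fin.val_rev]
  omega

theorem IsRightToLeftMax.of_mul_swap {u : Perm (Fin n)} {a b p : Fin n} (hab : a < b)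
    (hcov : invCount (u * swap a b) = invCount u + 1) (hpa : p ≠ a)
    (hp : (u * swap a b).IsRightToLeftMax p) : u.IsRightToLeftMax p := by
  have hu := apply_lt_apply_of_invCount_mul_swap u hab hcov
  have hbetween := fun c => apply_lt_of_invCount_mul_swap u hcov (c := c)
  intro q hpq
  have hq := hp q hpq
  have ha := hp a
  have hb := hp b
  simp only [Perm.mul_apply, swap_apply_def] at *
  split_ifs at * <;> grind

end Equiv.Perm

open Perm

section IncreasingChain

variable {n κ e : ℕ} {v : Fin (e + 1) → Perm (Fin n)} {A B : Fin e → Fin n}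

theorem IsIncKChain.apply_lt (hch : IsIncKChain n κ v A B) {p : Fin n} (hpκ : (p : ℕ) < κ)
    (hp : (v (Fin.last e)).IsRightToLeftMax p) (m : Fin (e + 1)) (j : Fin e)
    (hjm : j.castSucc < m) : v j.castSucc (A j) < v m p := by
  obtain ⟨hcov, hinc⟩ := hch
  induction m using Fin.reverseInduction with
  | last =>
    obtain _ | e := e
    · exact j.elim0
    have hlast :
        v (Fin.last e).castSucc (A (Fin.last e)) = v (Fin.last (e + 1)) (B (Fin.last e)) := by
      rw [(hcov _).2.2.1, Fin.succ_last]
      simp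
    calc v j.castSucc (A j) ≤ v (Fin.last e).castSucc (A (Fin.last e)) := by
          rcases (Fin.le_last j).lt_or_eq with h | rfl
          · exact (hinc _ _ h).le
          · rfl
      _ = v (Fin.last (e + 1)) (B (Fin.last e)) := hlast
      _ < v (Fin.last (e + 1)) p := hp _ (Fin.lt_def.mpr (hpκ.trans_le (hcov _).2.1))
  | cast i ih =>
    rcases eq_or_ne p (A i) with rfl | hpA
    · exact hinc j i (Fin.castSucc_lt_castSucc_iff.mp hjm)
    have hpB : p ≠ B i := fun h => by have := (hcov i).2.1; rw [← h] at this; omega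
    rw [(hcov i).2.2.1, Perm.mul_apply, swap_apply_of_ne_of_ne hpA hpB]
    exact ih (hjm.trans i.castSucc_lt_succ)

theorem rightToLeftMaxOutside_insert_of_mul_swap {S : Set ℕ} (hκ : κ ∉ S) {u : Perm (Fin n)}
    {a b : Fin n} (ha : (a : ℕ) < κ) (hb : κ ≤ (b : ℕ))
    (hcov : invCount (u * swap a b) = invCount u + 1)
    (hw : RightToLeftMaxOutside (insert κ S) (u * swap a b))
    (hfree : ∀ p : Fin n, (p : ℕ) < κ → (p : ℕ) + 1 ∉ S → u a < (u * swap a b) p) :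
    RightToLeftMaxOutside (insert κ S) u := by
  have hab : a < b := Fin.lt_def.mpr (ha.trans_le hb)
  have haS : (a : ℕ) + 1 ∈ insert κ S := by
    by_contra haS
    have hκa : (a : ℕ) + 1 ≠ κ := fun h => haS (h ▸ Set.mem_insert _ _)
    let q : Fin n := ⟨κ - 1, by omega⟩
    have haq : a < q := Fin.lt_def.mpr (show (a : ℕ) < κ - 1 by omega)
    have hqb : q < b := Fin.lt_def.mpr (show κ - 1 < (b : ℕ) by omega)
    have hwq : (u * swap a b) q = u q := by
      rw [Perm.mul_apply, swap_apply_of_ne_of_ne haq.ne' hqb.ne]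
    have huq : u a < u q := hwq ▸ hfree q (show κ - 1 < κ by omega) (by
      rwa [show κ - 1 + 1 = κ by omega])
    have := hw a haS q haq
    rw [hwq, Perm.mul_apply, swap_apply_left] at this
    exact this.not_gt (apply_lt_of_invCount_mul_swap u hcov haq hqb huq)
  exact fun p hp => (hw p hp).of_mul_swap hab hcov (by rintro rfl; exact hp haS)

theorem IsIncKChain.rightToLeftMaxOutside {S : Set ℕ} (hch : IsIncKChain n κ v A B)
    (hκ : κ ∉ S) (hS : RightToLeftMaxOutside S (v (Fin.last e))) :
    RightToLeftMaxOutside (insert κ S) (v 0) := by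
  suffices ∀ m, RightToLeftMaxOutside (insert κ S) (v m) from this 0
  intro m
  induction m using Fin.reverseInduction with
  | last => exact hS.mono (Set.subset_insert _ _)
  | cast i ih =>
    obtain ⟨ha, hb, heq, hinv⟩ := hch.1 i
    have hsucc : v i.succ = v i.castSucc * swap (A i) (B i) := by rw [heq, mul_swap_mul_self]
    rw [hsucc] at ih hinv
    refine rightToLeftMaxOutside_insert_of_mul_swap hκ ha hb hinv ih fun p hpκ hpS => ?_
    rw [← hsucc]
    exact hch.apply_lt hpκ (hS p hpS) i.succ i i.castSucc_lt_succ

end IncreasingChain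

theorem stmt7_general (n d k : ℕ) (V : Fin (d + 1) → Equiv.Perm (Fin n)) (K : Fin d → ℕ)
    (hinj : Function.Injective K)
    (hend : V (Fin.last d) = Fin.revPerm)
    (hsteps : ∀ i : Fin d,
      ∃ e, ExIncKChainLen n (K i) e (V i.castSucc) (V i.succ))
    (hmin : ∀ i, k ≤ K i) :
    ∀ p : Fin n, (p : ℕ) + 1 < k → V 0 p = Fin.rev p := by
  have hrtl : ∀ i : Fin (d + 1),
      RightToLeftMaxOutside {x | ∃ j : Fin d, i ≤ j.castSucc ∧ K j = x} (V i) := by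
    intro i
    induction i using Fin.reverseInduction with
    | last => rw [hend]; exact rightToLeftMaxOutside_revPerm _
    | cast i ih =>
      obtain ⟨e, v, A, B, hch, hv0, hvl⟩ := hsteps i
      have hKi : K i ∉ {x | ∃ j : Fin d, i.succ ≤ j.castSucc ∧ K j = x} := by
        rintro ⟨j, hij, hj⟩
        rw [hinj hj] at hij
        exact i.castSucc_lt_succ.not_ge hij
      rw [← hv0]
      refine (hch.rightToLeftMaxOutside hKi (hvl ▸ ih)).mono ?_
      rintro x (rfl | ⟨j, hij, rfl⟩)
      · exact ⟨i, le_rfl, rfl⟩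
      · exact ⟨j, i.castSucc_lt_succ.le.trans hij, rfl⟩
  intro p hp
  refine apply_eq_rev_of_isRightToLeftMax fun q hq => hrtl 0 q ?_
  rintro ⟨j, -, hj⟩
  have : (q : ℕ) ≤ p := hq
  have := hmin j
  omega

theorem stmt7 (n d k : ℕ) (V : Fin (d + 1) → Equiv.Perm (Fin n)) (K : Fin d → ℕ)
    (hK : ∀ i, 1 ≤ K i ∧ K i ≤ n - 1) (hinj : Function.Injective K)
    (hend : V (Fin.last d) = Fin.revPerm)
    (hsteps : ∀ i : Fin d,
      ∃ e, ExIncKChainLen n (K i) e (V i.castSucc) (V i.succ))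
    (hmin : ∀ i, k ≤ K i) (hmem : ∃ i, K i = k) :
    ∀ p : Fin n, (p : ℕ) + 1 < k → V 0 p = Fin.rev p :=
  stmt7_general n d k V K hinj hend hsteps hmin
end

section
/- Let k ∈ [n-1] and let u, v, w ∈ Sₙ be such that w(1) > w(a) > w(c) for indices 1 < a, 1 ≤ c with v = w·t_{1,a}, u = v·t_{1,c}, ℓ(v) = ℓ(w) - 1, ℓ(u) = ℓ(v) - 1, and u ⋖ₖ v (i.e., the cover v → u swaps positions 1 ≤ k < c). Assume w(k+1) > w(k+2) > ⋯ > w(n) and k < a. Then w(a) = w(c) + 1 and a = c - 1. -/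
/-! Swapping the entries at positions `i < j` of `v`, where `v j < v i`, removes the inversion
`(i, j)` and, for each `i < p < j` with `v j < v p < v i`, also `(i, p)` and `(p, j)`; so for a
Bruhat cover `v * swap 0 c ⋖ v` no such `p` exists. Here `v = w * swap 0 a` agrees with `w` off
`{0, a}` and `w` decreases from position `k` on, hence `a < c`. If `a + 1 < c`, the position
`a + 1` would be such a `p`; if `w c + 1 < w a`, so would the position of the value `w c + 1`. -/

open Equiv

theorem invCount_mul_swap_add_three_le {n : ℕ} (v : Perm (Fin n)) {i p j : Fin n}
    (hip : i < p) (hpj : p < j) (hjp : v j < v p) (hpi : v p < v i) :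
    invCount (v * swap i j) + 3 ≤ invCount v := by
  classical
  set s := swap i j
  set inv : Perm (Fin n) → Finset (Fin n × Fin n) :=
    fun σ => Finset.univ.filter fun q => q.1 < q.2 ∧ σ q.2 < σ q.1
  set E : Finset (Fin n × Fin n) := {(i, j), (i, p), (p, j)}
  -- `g` carries inversions of `v * s` to inversions of `v` and never hits `E`
  set g : Fin n × Fin n → Fin n × Fin n := fun q => if s q.1 < s q.2 then (s q.1, s q.2) else q
  have hE : E.card = 3 := by
    grind [Finset.card_insert_of_notMem, Finset.card_singleton]
  have hEsub : E ⊆ inv v := by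
    intro q hq
    simp only [E, Finset.mem_insert, Finset.mem_singleton] at hq
    simp only [inv, Finset.mem_filter, Finset.mem_univ, true_and]
    rcases hq with rfl | rfl | rfl <;> grind
  have hmaps : ∀ q ∈ inv (v * s), g q ∈ inv v \ E := by
    rintro ⟨x, y⟩ hq
    simp only [g, inv, E, Finset.mem_sdiff, Finset.mem_filter, Finset.mem_univ, true_and,
      Finset.mem_insert, Finset.mem_singleton, Perm.mul_apply, s, swap_apply_def] at hq ⊢
    split_ifs at hq ⊢ <;> grind
  have hinj : Set.InjOn g (inv (v * s)) := by
    rintro ⟨x, y⟩ hq ⟨x', y'⟩ hq' h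
    simp only [inv, Finset.coe_filter, Finset.mem_univ, true_and, Set.mem_ofPred_eq] at hq hq'
    have hss : ∀ z, s (s z) = z := swap_apply_self i j
    simp only [g] at h
    split_ifs at h <;> simp only [Prod.mk.injEq] at h
    · rw [s.injective h.1, s.injective h.2]
    · grind
    · grind
    · rw [h.1, h.2]
  calc invCount (v * s) + 3 ≤ (inv v \ E).card + E.card :=
        by rw [hE]; exact Nat.add_le_add_right (Finset.card_le_card_of_injOn g hmaps hinj) 3
    _ = invCount v := Finset.card_sdiff_add_card_eq_card hEsub

theorem not_lt_of_invCount_eq_mul_swap_add_one {n : ℕ} {v : Perm (Fin n)} {i p j : Fin n}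
    (hcov : invCount v = invCount (v * swap i j) + 1) (hip : i < p) (hpj : p < j)
    (hjp : v j < v p) : ¬ v p < v i := fun hpi => by
  have := invCount_mul_swap_add_three_le v hip hpj hjp hpi
  omega

theorem DescFrom.lt_of_apply_lt {n k : ℕ} {w : Perm (Fin n)} (hw : DescFrom n k w)
    {p q : Fin n} (hq : k ≤ (q : ℕ)) (h : w q < w p) : p < q := by
  by_contra! hqp
  rcases hqp.lt_or_eq with hqp | rfl
  · exact (hw q p hq hqp).asymm h
  · exact lt_irrefl _ h

theorem stmt8_general (n k : ℕ) (hn : 0 < n)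
    (w : Equiv.Perm (Fin n)) (a c : Fin n)
    (hka : k ≤ (a : ℕ)) (hkc : k ≤ (c : ℕ))
    (hw : DescFrom n k w)
    (hv1 : w c < w a) (hv2 : w a < w ⟨0, hn⟩)
    (hcov2 : invCount (w * Equiv.swap ⟨0, hn⟩ a)
      = invCount (w * Equiv.swap ⟨0, hn⟩ a * Equiv.swap ⟨0, hn⟩ c) + 1) :
    (w a : ℕ) = (w c : ℕ) + 1 ∧ (a : ℕ) + 1 = (c : ℕ) := by
  set z : Fin n := ⟨0, hn⟩
  set v := w * swap z a
  have hcz : c ≠ z := by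
    rintro rfl
    rw [swap_self, ← Perm.one_def, mul_one] at hcov2
    omega
  have hv_of_ne : ∀ p, p ≠ z → p ≠ a → v p = w p := fun p hz ha => by
    simp [v, swap_apply_of_ne_of_ne hz ha]
  have no_between : ∀ p, p ≠ z → p ≠ a → p < c → w c < w p → ¬ w p < w a := by
    intro p hpz hpa hpc hcp
    have hzp : z < p := Fin.lt_def.mpr (Nat.pos_of_ne_zero fun h => hpz (Fin.ext h))
    have := not_lt_of_invCount_eq_mul_swap_add_one hcov2 hzp hpc
      (by rwa [hv_of_ne c hcz (fun h => (h ▸ hv1).false), hv_of_ne p hpz hpa])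
    simpa [v, hv_of_ne p hpz hpa] using this
  constructor
  · by_contra hne
    have hv2' := Fin.lt_def.mp hv2
    obtain ⟨p, hp⟩ : ∃ p, (w p : ℕ) = w c + 1 := ⟨w.symm ⟨w c + 1, by omega⟩, by simp⟩
    have hpc : p < c := hw.lt_of_apply_lt hkc (Fin.lt_def.mpr (by omega))
    exact no_between p (by grind) (by grind) hpc (Fin.lt_def.mpr (by omega))
      (Fin.lt_def.mpr (by omega))
  · have hac : a < c := hw.lt_of_apply_lt hkc hv1
    by_contra hne
    set p : Fin n := ⟨a + 1, by omega⟩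
    have hap : a < p := Fin.lt_def.mpr (by simp [p])
    have hpc : p < c := Fin.lt_def.mpr (by grind)
    exact no_between p (fun h => by simp [p, z] at h) hap.ne' hpc
      (hw p c (hka.trans hap.le) hpc) (hw a p hka hap)

theorem stmt8 (n k : ℕ) (hn : 0 < n) (hk1 : 1 ≤ k) (hk2 : k ≤ n - 1)
    (w : Equiv.Perm (Fin n)) (a c : Fin n)
    (ha : 0 < (a : ℕ)) (hka : k ≤ (a : ℕ)) (hkc : k ≤ (c : ℕ))
    (hw : DescFrom n k w)
    (hv1 : w c < w a) (hv2 : w a < w ⟨0, hn⟩)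
    (hcov1 : invCount w = invCount (w * Equiv.swap ⟨0, hn⟩ a) + 1)
    (hcov2 : invCount (w * Equiv.swap ⟨0, hn⟩ a)
      = invCount (w * Equiv.swap ⟨0, hn⟩ a * Equiv.swap ⟨0, hn⟩ c) + 1) :
    (w a : ℕ) = (w c : ℕ) + 1 ∧ (a : ℕ) + 1 = (c : ℕ) :=
  stmt8_general n k hn w a c hka hkc hw hv1 hv2 hcov2
end

section
/- In the Fomin–Kirillov algebra ℰₙ, the Dunkl elements θ_i := −Σ_{j<i} d_{j,i} + Σ_{j>i} d_{i,j} (for i ∈ [n]) pairwise commute: θ_i θ_j = θ_j θ_i for all i, j ∈ [n]. -/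
/-- Index set of generators `d_{i,j}`, `i < j`, of the Fomin-Kirillov algebra. -/
abbrev FKIdx (n : ℕ) := {p : Fin n × Fin n // p.1 < p.2}

/-- Defining relations of the Fomin-Kirillov algebra `ℰₙ`. -/
inductive FKRel (n : ℕ) :
    FreeAlgebra ℚ (FKIdx n) → FreeAlgebra ℚ (FKIdx n) → Prop
  | sq (p : FKIdx n) :
      FKRel n (FreeAlgebra.ι ℚ p * FreeAlgebra.ι ℚ p) 0
  | r1 (i j k : Fin n) (hij : i < j) (hjk : j < k) :
      FKRel n
        (FreeAlgebra.ι ℚ (⟨(i, j), hij⟩ : FKIdx n) *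
          FreeAlgebra.ι ℚ (⟨(j, k), hjk⟩ : FKIdx n))
        (FreeAlgebra.ι ℚ (⟨(i, k), hij.trans hjk⟩ : FKIdx n) *
            FreeAlgebra.ι ℚ (⟨(i, j), hij⟩ : FKIdx n) +
          FreeAlgebra.ι ℚ (⟨(j, k), hjk⟩ : FKIdx n) *
            FreeAlgebra.ι ℚ (⟨(i, k), hij.trans hjk⟩ : FKIdx n))
  | r2 (i j k : Fin n) (hij : i < j) (hjk : j < k) :
      FKRel n
        (FreeAlgebra.ι ℚ (⟨(j, k), hjk⟩ : FKIdx n) *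
          FreeAlgebra.ι ℚ (⟨(i, j), hij⟩ : FKIdx n))
        (FreeAlgebra.ι ℚ (⟨(i, j), hij⟩ : FKIdx n) *
            FreeAlgebra.ι ℚ (⟨(i, k), hij.trans hjk⟩ : FKIdx n) +
          FreeAlgebra.ι ℚ (⟨(i, k), hij.trans hjk⟩ : FKIdx n) *
            FreeAlgebra.ι ℚ (⟨(j, k), hjk⟩ : FKIdx n))
  | comm (i j k l : Fin n) (hij : i < j) (hkl : k < l)
      (h1 : i ≠ k) (h2 : i ≠ l) (h3 : j ≠ k) (h4 : j ≠ l) :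
      FKRel n
        (FreeAlgebra.ι ℚ (⟨(i, j), hij⟩ : FKIdx n) *
          FreeAlgebra.ι ℚ (⟨(k, l), hkl⟩ : FKIdx n))
        (FreeAlgebra.ι ℚ (⟨(k, l), hkl⟩ : FKIdx n) *
          FreeAlgebra.ι ℚ (⟨(i, j), hij⟩ : FKIdx n))

/-- The Fomin-Kirillov algebra `ℰₙ`. -/
abbrev FK (n : ℕ) := RingQuot (FKRel n)

/-- The generator `d_{i,j}` for `i < j` (and `0` otherwise). -/
noncomputable def fkGen (n : ℕ) (i j : Fin n) : FK n :=
  if h : i < j then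
    RingQuot.mkAlgHom ℚ (FKRel n) (FreeAlgebra.ι ℚ (⟨(i, j), h⟩ : FKIdx n))
  else 0

/-- The Dunkl element `θ_i = -∑_{j<i} d_{j,i} + ∑_{j>i} d_{i,j}`. -/
noncomputable def dunkl (n : ℕ) (i : Fin n) : FK n :=
  ∑ j : Fin n, (if j < i then -fkGen n j i else fkGen n i j)

section FKAux

variable {n : ℕ}

lemma fk_mul_neg (a b : FK n) : a * -b = -(a * b) := mul_neg a b
lemma fk_neg_mul (a b : FK n) : -a * b = -(a * b) := neg_mul a b
lemma fk_neg_neg (a : FK n) : -(-a) = a := neg_neg a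
lemma fk_mul_zero (a : FK n) : a * 0 = 0 := mul_zero a
lemma fk_zero_mul (a : FK n) : 0 * a = 0 := zero_mul a
lemma fk_sub_zero (a : FK n) : a - 0 = a := sub_zero a
lemma fk_zero_sub (a : FK n) : 0 - a = -a := zero_sub a
lemma fk_sub_mul (a b c : FK n) : (a - b) * c = a * c - b * c := sub_mul a b c
lemma fk_mul_sub (a b c : FK n) : a * (b - c) = a * b - a * c := mul_sub a b c

lemma fkGen_zero {i j : Fin n} (h : ¬ i < j) : fkGen n i j = 0 :=
  dif_neg h

lemma fkRel1 {i j k : Fin n} (hij : i < j) (hjk : j < k) :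
    fkGen n i j * fkGen n j k =
      fkGen n i k * fkGen n i j + fkGen n j k * fkGen n i k := by
  simp only [fkGen, dif_pos hij, dif_pos hjk, dif_pos (hij.trans hjk)]
  rw [← map_mul, ← map_mul, ← map_mul, ← map_add]
  exact RingQuot.mkAlgHom_rel ℚ (FKRel.r1 i j k hij hjk)

lemma fkRel2 {i j k : Fin n} (hij : i < j) (hjk : j < k) :
    fkGen n j k * fkGen n i j =
      fkGen n i j * fkGen n i k + fkGen n i k * fkGen n j k := by
  simp only [fkGen, dif_pos hij, dif_pos hjk, dif_pos (hij.trans hjk)]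
  rw [← map_mul, ← map_mul, ← map_mul, ← map_add]
  exact RingQuot.mkAlgHom_rel ℚ (FKRel.r2 i j k hij hjk)

lemma fkComm (i j k l : Fin n) (h1 : i ≠ k) (h2 : i ≠ l)
    (h3 : j ≠ k) (h4 : j ≠ l) :
    fkGen n i j * fkGen n k l = fkGen n k l * fkGen n i j := by
  by_cases hij : i < j
  · by_cases hkl : k < l
    · simp only [fkGen, dif_pos hij, dif_pos hkl]
      rw [← map_mul, ← map_mul]
      exact RingQuot.mkAlgHom_rel ℚ (FKRel.comm i j k l hij hkl h1 h2 h3 h4)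
    · rw [fkGen_zero hkl, fk_mul_zero, fk_zero_mul]
  · rw [fkGen_zero hij, fk_mul_zero, fk_zero_mul]

/-- Antisymmetrized generator. -/
noncomputable def DD (n : ℕ) (i j : Fin n) : FK n := fkGen n i j - fkGen n j i

lemma DD_self (i : Fin n) : DD n i i = 0 := sub_self _

lemma DD_swap (i j : Fin n) : DD n j i = -DD n i j :=
  (neg_sub (fkGen n i j) (fkGen n j i)).symm

lemma DD_of_lt {i j : Fin n} (h : i < j) : DD n i j = fkGen n i j := by
  rw [DD, fkGen_zero (asymm h), fk_sub_zero]

lemma DD_of_gt {i j : Fin n} (h : j < i) : DD n i j = -fkGen n j i := by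
  rw [DD, fkGen_zero (asymm h), fk_zero_sub]

lemma DD_comm (i j k l : Fin n) (h1 : i ≠ k) (h2 : i ≠ l)
    (h3 : j ≠ k) (h4 : j ≠ l) :
    DD n i j * DD n k l = DD n k l * DD n i j := by
  simp only [DD, fk_sub_mul, fk_mul_sub]
  rw [fkComm i j k l h1 h2 h3 h4, fkComm i j l k h2 h1 h4 h3,
      fkComm j i k l h3 h4 h1 h2, fkComm j i l k h4 h3 h2 h1]
  abel

lemma fk_triple (i j k : Fin n) (hij : i ≠ j) (hik : i ≠ k) (hjk : j ≠ k) :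
    (DD n i k * DD n j i - DD n j i * DD n i k) +
      (DD n i k * DD n j k - DD n j k * DD n i k) +
      (DD n i j * DD n j k - DD n j k * DD n i j) = 0 := by
  rcases lt_trichotomy i j with h1 | h1 | h1
  · rcases lt_trichotomy j k with h2 | h2 | h2
    · -- i < j < k
      rw [DD_of_lt (h1.trans h2), DD_of_gt h1, DD_of_lt h2, DD_of_lt h1]
      simp only [fk_mul_neg, fk_neg_mul, fk_neg_neg]
      rw [fkRel1 h1 h2, fkRel2 h1 h2]
      abel
    · exact absurd h2 hjk
    · rcases lt_trichotomy i k with h3 | h3 | h3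
      · -- i < k < j
        rw [DD_of_lt h3, DD_of_gt h1, DD_of_gt h2, DD_of_lt h1]
        simp only [fk_mul_neg, fk_neg_mul, fk_neg_neg]
        rw [fkRel1 h3 h2, fkRel2 h3 h2]
        abel
      · exact absurd h3 hik
      · -- k < i < j
        rw [DD_of_gt h3, DD_of_gt h1, DD_of_gt h2, DD_of_lt h1]
        simp only [fk_mul_neg, fk_neg_mul, fk_neg_neg]
        rw [fkRel1 h3 h1, fkRel2 h3 h1]
        abel
  · exact absurd h1 hij
  · rcases lt_trichotomy j k with h2 | h2 | h2
    · rcases lt_trichotomy i k with h3 | h3 | h3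
      · -- j < i < k
        rw [DD_of_lt h3, DD_of_lt h1, DD_of_lt h2, DD_of_gt h1]
        simp only [fk_mul_neg, fk_neg_mul, fk_neg_neg]
        rw [fkRel1 h1 h3, fkRel2 h1 h3]
        abel
      · exact absurd h3 hik
      · -- j < k < i
        rw [DD_of_gt h3, DD_of_lt h1, DD_of_lt h2, DD_of_gt h1]
        simp only [fk_mul_neg, fk_neg_mul, fk_neg_neg]
        rw [fkRel1 h2 h3, fkRel2 h2 h3]
        abel
    · exact absurd h2 hjk
    · -- k < j < i
      rw [DD_of_gt (h2.trans h1), DD_of_lt h1, DD_of_gt h2, DD_of_gt h1]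
      simp only [fk_mul_neg, fk_neg_mul, fk_neg_neg]
      rw [fkRel1 h2 h1, fkRel2 h2 h1]
      abel

lemma dunkl_eq (i : Fin n) : dunkl n i = ∑ k : Fin n, DD n i k := by
  unfold dunkl
  refine Finset.sum_congr rfl fun k _ => ?_
  by_cases h : k < i
  · rw [if_pos h, DD, fkGen_zero (asymm h), fk_zero_sub]
  · rw [if_neg h, DD, fkGen_zero h, fk_sub_zero]

end FKAux

theorem stmt10 (n : ℕ) (i j : Fin n) :
    dunkl n i * dunkl n j = dunkl n j * dunkl n i := by
  rcases eq_or_ne i j with rfl | hij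
  · rfl
  classical
  have key : ∑ k : Fin n, ∑ l : Fin n,
      (DD n i k * DD n j l - DD n j l * DD n i k) = 0 := by
    rw [← Finset.sum_sdiff (Finset.subset_univ ({i, j} : Finset (Fin n)))]
    have hfk : ∀ k ∈ Finset.univ \ ({i, j} : Finset (Fin n)),
        (∑ l : Fin n, (DD n i k * DD n j l - DD n j l * DD n i k))
          = (DD n i k * DD n j i - DD n j i * DD n i k)
            + (DD n i k * DD n j k - DD n j k * DD n i k) := by
      intro k hk
      obtain ⟨hki, hkj⟩ : k ≠ i ∧ k ≠ j := by
        simpa [Finset.mem_sdiff, not_or] using hk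
      rw [← Finset.sum_subset (Finset.subset_univ ({i, k} : Finset (Fin n)))
        (fun l _ hl => ?_), Finset.sum_pair (Ne.symm hki)]
      obtain ⟨hli, hlk⟩ : l ≠ i ∧ l ≠ k := by
        simpa [Finset.mem_insert, not_or] using hl
      exact sub_eq_zero_of_eq (DD_comm i k j l hij (Ne.symm hli) hkj (Ne.symm hlk))
    rw [Finset.sum_congr rfl hfk, Finset.sum_pair hij]
    have hfi : (∑ l : Fin n, (DD n i i * DD n j l - DD n j l * DD n i i)) = 0 :=
      Finset.sum_eq_zero fun l _ => by
        rw [DD_self, fk_zero_mul, fk_mul_zero]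
        exact sub_self 0
    have hfj : (∑ l : Fin n, (DD n i j * DD n j l - DD n j l * DD n i j))
        = ∑ l ∈ Finset.univ \ ({i, j} : Finset (Fin n)),
            (DD n i j * DD n j l - DD n j l * DD n i j) := by
      refine (Finset.sum_subset (Finset.subset_univ _) fun l _ hl => ?_).symm
      have hmem : l ∈ ({i, j} : Finset (Fin n)) := by
        by_contra hmem
        exact hl (Finset.mem_sdiff.mpr ⟨Finset.mem_univ l, hmem⟩)
      have : l = i ∨ l = j := by simpa using hmem
      rcases this with h | h <;> rw [h]
      · rw [DD_swap i j]
        simp only [fk_mul_neg, fk_neg_mul, fk_neg_neg]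
        exact sub_self _
      · rw [DD_self, fk_mul_zero, fk_zero_mul]
        exact sub_self 0
    rw [hfi, hfj, zero_add, ← Finset.sum_add_distrib]
    refine Finset.sum_eq_zero fun k hk => ?_
    obtain ⟨hki, hkj⟩ : k ≠ i ∧ k ≠ j := by
      simpa [Finset.mem_sdiff, not_or] using hk
    exact fk_triple i j k hij (Ne.symm hki) (Ne.symm hkj)
  have expand : dunkl n i * dunkl n j - dunkl n j * dunkl n i
      = ∑ k : Fin n, ∑ l : Fin n, (DD n i k * DD n j l - DD n j l * DD n i k) := by
    rw [dunkl_eq, dunkl_eq, Finset.sum_mul_sum, Finset.sum_mul_sum,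
      Finset.sum_comm (s := Finset.univ) (t := Finset.univ)
        (f := fun k l => DD n j k * DD n i l),
      ← Finset.sum_sub_distrib]
    exact Finset.sum_congr rfl fun k _ => by rw [← Finset.sum_sub_distrib]
  exact sub_eq_zero.mp (expand.trans key)
end

section
/- Consider the right action of the Fomin–Kirillov generators on the free ℚ-vector space ℚ[Sₙ] defined by w ⊙ d_{i,j} = w·t_{i,j} if w·t_{i,j} ⋖ w in Bruhat order (i.e., ℓ(w·t_{i,j}) = ℓ(w) − 1) and w ⊙ d_{i,j} = 0 otherwise, extended linearly; similarly let w ⊙ u_i = w·t_{i,i+1} if w(i) < w(i+1) and 0 otherwise. Then for all 1 ≤ i < i+1 < j ≤ n and all w ∈ Sₙ: (w ⊙ d_{i,j}) ⊙ u_i = (w ⊙ u_i) ⊙ d_{i+1,j} and (w ⊙ d_{i+1,j}) ⊙ u_i = (w ⊙ u_i) ⊙ d_{i,j}. -/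
/-- The free `ℚ`-vector space on `Sₙ`. -/
abbrev PermMod (n : ℕ) := Equiv.Perm (Fin n) →₀ ℚ

/-- The operator `⊙ d_{a,b}` on `ℚ[Sₙ]`: sends `w` to `w * t_{a,b}` if the
length drops by exactly one, and to `0` otherwise; extended linearly. -/
noncomputable def dOp (n : ℕ) (a b : Fin n) : PermMod n →ₗ[ℚ] PermMod n :=
  Finsupp.lsum ℚ fun w =>
    LinearMap.toSpanSingleton ℚ (PermMod n)
      (if invCount w = invCount (w * Equiv.swap a b) + 1 then
        Finsupp.single (w * Equiv.swap a b) 1 else 0)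

/-- The operator `⊙ u_i` on `ℚ[Sₙ]` (with `b` intended to be `a + 1`):
sends `w` to `w * t_{a,b}` if `w a < w b`, and to `0` otherwise. -/
noncomputable def uOp (n : ℕ) (a b : Fin n) : PermMod n →ₗ[ℚ] PermMod n :=
  Finsupp.lsum ℚ fun w =>
    LinearMap.toSpanSingleton ℚ (PermMod n)
      (if w a < w b then Finsupp.single (w * Equiv.swap a b) 1 else 0)

/-!
Each operator sends a basis permutation `w` to `0` or to `w` times a transposition, so each side of
either identity is `0` or a single permutation; the permutations agree because
`t_{i,j} t_{i,i+1} = t_{i,i+1} t_{i+1,j}` and `t_{i+1,j} t_{i,i+1} = t_{i,i+1} t_{i,j}`.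
That the two sides vanish together comes from the cover criterion: for `p < q`, comparing the
inversions of `w` and `w t_{p,q}` pair by pair gives
`ℓ(w) - ℓ(w t_{p,q}) = ±(1 + 2 #{m ∈ (p, q) | w m lies strictly between w p and w q})`,
so `w t_{p,q} ⋖ w` iff `w q < w p` and no `m ∈ (p, q)` has `w q < w m < w p`. As `i + 1` is the
only position of `(i, j)` outside `(i + 1, j)`, both conditions reduce to the same inequalities
among `w i`, `w (i + 1)`, `w j` together with the same condition on `(i + 1, j)`.
-/

open Finset Equiv

section

variable {n : ℕ}

def inversionPairs (σ : Perm (Fin n)) : Finset (Fin n × Fin n) :=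
  univ.filter fun x => x.1 < x.2 ∧ σ x.2 < σ x.1

lemma invCount_eq_sum (w : Perm (Fin n)) :
    (invCount w : ℤ) = ∑ x : Fin n × Fin n, if x.1 < x.2 ∧ w x.2 < w x.1 then 1 else 0 := by
  rw [invCount, natCast_card_filter]

lemma invCount_mul_inv_eq_sum (w σ : Perm (Fin n)) :
    (invCount (w * σ⁻¹) : ℤ) =
      ∑ x : Fin n × Fin n, if σ x.1 < σ x.2 ∧ w x.2 < w x.1 then 1 else 0 := by
  rw [invCount_eq_sum]
  exact Fintype.sum_equiv (σ⁻¹.prodCongr σ⁻¹) _ _ fun x => by simp; rfl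

/-- Only the pairs whose order `σ` reverses change their status as inversions. -/
lemma invCount_sub_invCount_mul_inv (w σ : Perm (Fin n)) :
    (invCount w : ℤ) - invCount (w * σ⁻¹) =
      ∑ x ∈ inversionPairs σ, ((if w x.2 < w x.1 then 1 else 0) - if w x.1 < w x.2 then 1 else 0) := by
  have hswap : ∑ x ∈ inversionPairs σ, (if w x.1 < w x.2 then (1 : ℤ) else 0) =
      ∑ x : Fin n × Fin n, if x.2 < x.1 ∧ σ x.1 < σ x.2 ∧ w x.2 < w x.1 then 1 else 0 := by
    rw [inversionPairs, sum_filter]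
    exact Fintype.sum_equiv (Equiv.prodComm _ _) _ _ fun x => by
      by_cases h₁ : x.1 < x.2 <;> by_cases h₂ : σ x.2 < σ x.1 <;> simp [h₁, h₂]
  rw [sum_sub_distrib, hswap, invCount_eq_sum, invCount_mul_inv_eq_sum, inversionPairs,
    sum_filter, ← sum_sub_distrib, ← sum_sub_distrib]
  refine sum_congr rfl fun x _ => ?_
  rcases eq_or_ne x.1 x.2 with h | h
  · simp [h]
  · have hσ : (σ x.1 : ℕ) ≠ σ x.2 := by simpa [Fin.val_inj] using h
    have h' : (x.1 : ℕ) ≠ x.2 := by simpa [Fin.val_inj] using h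
    simp only [Fin.lt_def]
    split_ifs <;> omega

lemma inversionPairs_swap {p q : Fin n} (hpq : p < q) :
    inversionPairs (swap p q) =
      insert (p, q) ((Ioo p q).map ⟨(p, ·), Prod.mk_right_injective p⟩ ∪
        (Ioo p q).map ⟨(·, q), Prod.mk_left_injective q⟩) := by
  ext ⟨x, y⟩
  rw [Fin.lt_def] at hpq
  simp only [inversionPairs, mem_filter, mem_univ, true_and, mem_insert, mem_union, mem_map,
    mem_Ioo, Function.Embedding.coeFn_mk, Prod.mk.injEq, swap_apply_def, Fin.lt_def, Fin.ext_iff]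
  split_ifs <;> grind

lemma sum_inversionPairs_swap {p q : Fin n} (hpq : p < q) (f : Fin n × Fin n → ℤ) :
    ∑ x ∈ inversionPairs (swap p q), f x = f (p, q) + ∑ m ∈ Ioo p q, (f (p, m) + f (m, q)) := by
  rw [inversionPairs_swap hpq, sum_insert, sum_union, sum_map, sum_map, sum_add_distrib]
  · rfl
  · simp only [disjoint_left, mem_map, mem_Ioo, Function.Embedding.coeFn_mk]
    grind
  · simp only [mem_union, mem_map, mem_Ioo, Function.Embedding.coeFn_mk]
    grind

def invSign (w : Perm (Fin n)) (x y : Fin n) : ℤ :=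
  (if w y < w x then 1 else 0) - if w x < w y then 1 else 0

lemma invCount_sub_invCount_mul_swap (w : Perm (Fin n)) {p q : Fin n} (hpq : p < q) :
    (invCount w : ℤ) - invCount (w * swap p q) =
      invSign w p q + ∑ m ∈ Ioo p q, (invSign w p m + invSign w m q) := by
  rw [← swap_inv, invCount_sub_invCount_mul_inv, sum_inversionPairs_swap hpq]
  rfl

theorem invCount_eq_invCount_mul_swap_add_one_iff (w : Perm (Fin n)) {p q : Fin n}
    (hpq : p < q) :
    invCount w = invCount (w * swap p q) + 1 ↔
      w q < w p ∧ ∀ m, p < m → m < q → ¬(w q < w m ∧ w m < w p) := by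
  have hD := invCount_sub_invCount_mul_swap w hpq
  have hval : ∀ {x y : Fin n}, x ≠ y → (w x : ℕ) ≠ w y := fun h => by
    simpa [Fin.val_inj] using h
  rcases lt_or_gt_of_ne (hval hpq.ne) with hlt | hgt
  · have hsum : ∑ m ∈ Ioo p q, (invSign w p m + invSign w m q) ≤ 0 := sum_nonpos fun m hm => by
      rw [mem_Ioo] at hm
      have := hval hm.1.ne'
      have := hval hm.2.ne
      simp only [invSign, Fin.lt_def]
      split_ifs <;> omega
    have hsign : invSign w p q = -1 := by
      simp only [invSign, Fin.lt_def]
      split_ifs <;> omega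
    exact iff_of_false (by omega) fun h => absurd h.1 (by rw [Fin.lt_def]; omega)
  · have hterm : ∀ m ∈ Ioo p q,
        invSign w p m + invSign w m q = if w q < w m ∧ w m < w p then 2 else 0 := by
      intro m hm
      rw [mem_Ioo] at hm
      have := hval hm.1.ne'
      have := hval hm.2.ne
      simp only [invSign, Fin.lt_def]
      split_ifs <;> omega
    have hsign : invSign w p q = 1 := by
      simp only [invSign, Fin.lt_def]
      split_ifs <;> omega
    rw [sum_congr rfl hterm, ← sum_filter, sum_const, nsmul_eq_mul, hsign] at hD
    have hempty : (∀ m, p < m → m < q → ¬(w q < w m ∧ w m < w p)) ↔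
        #{m ∈ Ioo p q | w q < w m ∧ w m < w p} = 0 := by
      simp [filter_eq_empty_iff, and_imp]
    rw [Fin.lt_def, hempty]
    simp only [hgt, true_and]
    omega

lemma forall_between_succ {i i' j : Fin n} (hi' : (i' : ℕ) = i + 1) (hi'j : i' < j)
    (P : Fin n → Prop) :
    (∀ m, i < m → m < j → P m) ↔ P i' ∧ ∀ m, i' < m → m < j → P m := by
  have hlt : ∀ m : Fin n, i < m ↔ m = i' ∨ i' < m := fun m => by
    simp only [Fin.lt_def, Fin.ext_iff]; omega
  simp only [hlt, or_imp, forall_and, forall_eq, hi'j, true_implies]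

lemma dOp_single (a b : Fin n) (v : Perm (Fin n)) :
    dOp n a b (Finsupp.single v 1) =
      if invCount v = invCount (v * swap a b) + 1 then Finsupp.single (v * swap a b) 1
      else 0 := by
  rw [dOp, Finsupp.lsum_single, LinearMap.toSpanSingleton_apply, one_smul]

lemma uOp_single (a b : Fin n) (v : Perm (Fin n)) :
    uOp n a b (Finsupp.single v 1) =
      if v a < v b then Finsupp.single (v * swap a b) 1 else 0 := by
  rw [uOp, Finsupp.lsum_single, LinearMap.toSpanSingleton_apply, one_smul]

lemma uOp_dOp_single (a b c d : Fin n) (v : Perm (Fin n)) :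
    uOp n a b (dOp n c d (Finsupp.single v 1)) =
      if invCount v = invCount (v * swap c d) + 1 ∧ (v * swap c d) a < (v * swap c d) b then
        Finsupp.single (v * swap c d * swap a b) 1
      else 0 := by
  rw [dOp_single, apply_ite (uOp n a b), map_zero, uOp_single, ite_and]

lemma dOp_uOp_single (a b c d : Fin n) (v : Perm (Fin n)) :
    dOp n c d (uOp n a b (Finsupp.single v 1)) =
      if v a < v b ∧ invCount (v * swap a b) = invCount (v * swap a b * swap c d) + 1 then
        Finsupp.single (v * swap a b * swap c d) 1
      else 0 := by
  rw [uOp_single, apply_ite (dOp n c d), map_zero, dOp_single, ite_and]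

lemma swap_mul_swap_eq_swap_mul_swap {α : Type*} [DecidableEq α] (a b c d : α) :
    swap a b * swap c d = swap c d * swap (swap c d a) (swap c d b) := by
  rw [swap_mul_eq_mul_swap, swap_inv]

section Commutation

variable {i i' j : Fin n}

theorem uOp_comp_dOp (hi' : (i' : ℕ) = i + 1) (hi'j : i' < j) :
    uOp n i i' ∘ₗ dOp n i j = dOp n i' j ∘ₗ uOp n i i' := by
  have hii' : i < i' := by rw [Fin.lt_def]; omega
  have hij : i < j := hii'.trans hi'j
  ext v : 2
  simp only [LinearMap.comp_apply, Finsupp.lsingle_apply, uOp_dOp_single, dOp_uOp_single]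
  have hperm : v * swap i j * swap i i' = v * swap i i' * swap i' j := by
    rw [mul_assoc, mul_assoc, swap_mul_swap_eq_swap_mul_swap, swap_apply_left,
      swap_apply_of_ne_of_ne hij.ne' hi'j.ne']
  rw [hperm]
  refine if_congr ?_ rfl rfl
  have hfix : ∀ m, i' < m → (v * swap i i') m = v m := fun m hm =>
    congrArg v (swap_apply_of_ne_of_ne (hii'.trans hm).ne' hm.ne')
  rw [invCount_eq_invCount_mul_swap_add_one_iff v hij, forall_between_succ hi' hi'j,
    invCount_eq_invCount_mul_swap_add_one_iff _ hi'j]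
  simp +contextual only [hfix, Perm.mul_apply, swap_apply_left, swap_apply_right,
    swap_apply_of_ne_of_ne hij.ne' hi'j.ne', swap_apply_of_ne_of_ne hii'.ne' hi'j.ne]
  have := v.injective.ne hii'.ne
  grind

theorem uOp_comp_dOp_succ (hi' : (i' : ℕ) = i + 1) (hi'j : i' < j) :
    uOp n i i' ∘ₗ dOp n i' j = dOp n i j ∘ₗ uOp n i i' := by
  have hii' : i < i' := by rw [Fin.lt_def]; omega
  have hij : i < j := hii'.trans hi'j
  ext v : 2
  simp only [LinearMap.comp_apply, Finsupp.lsingle_apply, uOp_dOp_single, dOp_uOp_single]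
  have hperm : v * swap i' j * swap i i' = v * swap i i' * swap i j := by
    rw [mul_assoc, mul_assoc, swap_mul_swap_eq_swap_mul_swap, swap_apply_right,
      swap_apply_of_ne_of_ne hij.ne' hi'j.ne']
  rw [hperm]
  refine if_congr ?_ rfl rfl
  have hfix : ∀ m, i' < m → (v * swap i i') m = v m := fun m hm =>
    congrArg v (swap_apply_of_ne_of_ne (hii'.trans hm).ne' hm.ne')
  rw [invCount_eq_invCount_mul_swap_add_one_iff v hi'j,
    invCount_eq_invCount_mul_swap_add_one_iff _ hij, forall_between_succ hi' hi'j]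
  simp +contextual only [hfix, Perm.mul_apply, swap_apply_left, swap_apply_right,
    swap_apply_of_ne_of_ne hij.ne' hi'j.ne', swap_apply_of_ne_of_ne hii'.ne hij.ne]
  have := v.injective.ne hij.ne
  grind

end Commutation

end

theorem stmt11 (n : ℕ) (i j : Fin n) (hij : (i : ℕ) + 1 < (j : ℕ))
    (w : Equiv.Perm (Fin n)) :
    uOp n i ⟨(i : ℕ) + 1, Nat.lt_trans hij j.isLt⟩
        (dOp n i j (Finsupp.single w 1)) =
      dOp n ⟨(i : ℕ) + 1, Nat.lt_trans hij j.isLt⟩ j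
        (uOp n i ⟨(i : ℕ) + 1, Nat.lt_trans hij j.isLt⟩ (Finsupp.single w 1)) ∧
    uOp n i ⟨(i : ℕ) + 1, Nat.lt_trans hij j.isLt⟩
        (dOp n ⟨(i : ℕ) + 1, Nat.lt_trans hij j.isLt⟩ j (Finsupp.single w 1)) =
      dOp n i j
        (uOp n i ⟨(i : ℕ) + 1, Nat.lt_trans hij j.isLt⟩ (Finsupp.single w 1)) := by
  set i' : Fin n := ⟨(i : ℕ) + 1, Nat.lt_trans hij j.isLt⟩
  have hi'j : i' < j := Fin.lt_def.mpr hij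
  exact ⟨LinearMap.congr_fun (uOp_comp_dOp rfl hi'j) _,
    LinearMap.congr_fun (uOp_comp_dOp_succ rfl hi'j) _⟩
end

section
/- For the right action of Fomin–Kirillov generators on ℚ[Sₙ] defined by w ⊙ d_{i,j} = w·t_{i,j} if ℓ(w·t_{i,j}) = ℓ(w) − 1 and 0 otherwise: if k ∈ [n-1], w ∈ Sₙ satisfies w(k+1) > w(k+2) > ⋯ > w(n), and d_{a,b} is any generator with a ≤ k, then w ⊙ d_{a,b} is either 0 or a permutation v satisfying v(k+1) > v(k+2) > ⋯ > v(n). -/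
/-! ### Auxiliary machinery -/

/-- The inversion set of a permutation. -/
def InvSet {n : ℕ} (w : Equiv.Perm (Fin n)) : Finset (Fin n × Fin n) :=
  Finset.univ.filter (fun p : Fin n × Fin n => p.1 < p.2 ∧ w p.2 < w p.1)

lemma invCount_eq_card {n : ℕ} (w : Equiv.Perm (Fin n)) : invCount w = (InvSet w).card := rfl

lemma mem_InvSet {n : ℕ} {w : Equiv.Perm (Fin n)} {x : Fin n × Fin n} :
    x ∈ InvSet w ↔ x.1 < x.2 ∧ w x.2 < w x.1 := by simp [InvSet]

/-- The "special" pairs associated to a swap `(a b)`. -/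
def Cnd {n : ℕ} (a b : Fin n) (x : Fin n × Fin n) : Prop :=
  (x.1 = a ∧ x.2 ≤ b) ∨ (x.2 = b ∧ a ≤ x.1)

instance {n : ℕ} (a b : Fin n) (x : Fin n × Fin n) : Decidable (Cnd a b x) := by
  unfold Cnd; infer_instance

/-- The injection used in the counting argument. -/
def phiAux {n : ℕ} (a b : Fin n) (x : Fin n × Fin n) : Fin n × Fin n :=
  if Cnd a b x then x else (Equiv.swap a b x.1, Equiv.swap a b x.2)

lemma phiAux_pos {n : ℕ} (a b : Fin n) (x : Fin n × Fin n) (h : Cnd a b x) :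
    phiAux a b x = x := if_pos h

lemma phiAux_neg {n : ℕ} (a b : Fin n) (x : Fin n × Fin n) (h : ¬ Cnd a b x) :
    phiAux a b x = (Equiv.swap a b x.1, Equiv.swap a b x.2) := if_neg h

lemma swap_sorted {n : ℕ} (a b : Fin n) (hab : a < b) (p q : Fin n) (hpq : p < q)
    (hC : ¬ Cnd a b (p, q)) :
    Equiv.swap a b p < Equiv.swap a b q ∧
      ¬ Cnd a b (Equiv.swap a b p, Equiv.swap a b q) := by
  have hab' : (a : ℕ) < (b : ℕ) := hab
  have hpq' : (p : ℕ) < (q : ℕ) := hpq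
  have hC1 : (p : ℕ) = a → (b : ℕ) < q := by
    intro h1
    by_contra h2
    push_neg at h2
    exact hC (Or.inl ⟨Fin.ext h1, Fin.le_def.2 h2⟩)
  have hC2 : (q : ℕ) = b → (p : ℕ) < a := by
    intro h1
    by_contra h2
    push_neg at h2
    exact hC (Or.inr ⟨Fin.ext h1, Fin.le_def.2 h2⟩)
  by_cases hpa : p = a
  · have hq : (b : ℕ) < q := hC1 (by rw [hpa])
    rw [hpa, Equiv.swap_apply_left,
      Equiv.swap_apply_of_ne_of_ne (Fin.ne_of_val_ne (by omega)) (Fin.ne_of_val_ne (by omega))]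
    simp only [Cnd, Fin.lt_def, Fin.le_def, Fin.ext_iff]
    omega
  by_cases hpb : p = b
  · have hq : (b : ℕ) < q := by rw [← congrArg Fin.val hpb]; exact hpq'
    rw [hpb, Equiv.swap_apply_right,
      Equiv.swap_apply_of_ne_of_ne (Fin.ne_of_val_ne (by omega)) (Fin.ne_of_val_ne (by omega))]
    simp only [Cnd, Fin.lt_def, Fin.le_def, Fin.ext_iff]
    omega
  by_cases hqa : q = a
  · have hp : (p : ℕ) < a := by rw [← congrArg Fin.val hqa]; exact hpq'
    rw [hqa, Equiv.swap_apply_left, Equiv.swap_apply_of_ne_of_ne hpa hpb]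
    simp only [Cnd, Fin.lt_def, Fin.le_def, Fin.ext_iff]
    omega
  by_cases hqb : q = b
  · have hp : (p : ℕ) < a := hC2 (by rw [hqb])
    rw [hqb, Equiv.swap_apply_right, Equiv.swap_apply_of_ne_of_ne hpa hpb]
    simp only [Cnd, Fin.lt_def, Fin.le_def, Fin.ext_iff]
    omega
  · rw [Equiv.swap_apply_of_ne_of_ne hpa hpb, Equiv.swap_apply_of_ne_of_ne hqa hqb]
    exact ⟨hpq, hC⟩

/-- Master counting lemma: if `w b < w a` and `S` is a set of inversions of `w` consisting of
"special" pairs that are not inversions of `w * swap a b`, then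
`invCount (w * swap a b) + |S| ≤ invCount w`. -/
lemma master {n : ℕ} (w : Equiv.Perm (Fin n)) (a b : Fin n) (hab : a < b)
    (h : w b < w a) (S : Finset (Fin n × Fin n)) (hS : S ⊆ InvSet w)
    (hSC : ∀ x ∈ S, Cnd a b x)
    (hSv : ∀ x ∈ S, x ∉ InvSet (w * Equiv.swap a b)) :
    invCount (w * Equiv.swap a b) + S.card ≤ invCount w := by
  classical
  have hmaps : ∀ x ∈ InvSet (w * Equiv.swap a b), phiAux a b x ∈ InvSet w \ S := by
    rintro ⟨p, q⟩ hx
    obtain ⟨hpq, hv⟩ := mem_InvSet.1 hx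
    simp only [Equiv.Perm.mul_apply] at hv
    by_cases hC : Cnd a b (p, q)
    · rw [Finset.mem_sdiff, phiAux_pos a b _ hC]
      refine ⟨mem_InvSet.2 ⟨hpq, ?_⟩, fun hmem => hSv _ hmem hx⟩
      simp only [Cnd] at hC
      rcases hC with ⟨hpa, hqb⟩ | ⟨hqb, hap⟩
      · have hqa : q ≠ a := by rw [← hpa]; exact ne_of_gt hpq
        have hqb' : q < b := by
          rcases lt_or_eq_of_le hqb with h' | h'
          · exact h'
          · rw [hpa, h', Equiv.swap_apply_left, Equiv.swap_apply_right] at hv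
            exact absurd hv (not_lt.2 h.le)
        rw [hpa, Equiv.swap_apply_left,
          Equiv.swap_apply_of_ne_of_ne hqa (ne_of_lt hqb')] at hv
        rw [hpa]
        exact hv.trans h
      · have hpb : p ≠ b := by rw [← hqb]; exact ne_of_lt hpq
        have hpa' : a < p := by
          rcases lt_or_eq_of_le hap with h' | h'
          · exact h'
          · rw [hqb, ← h', Equiv.swap_apply_left, Equiv.swap_apply_right] at hv
            exact absurd hv (not_lt.2 h.le)
        rw [hqb, Equiv.swap_apply_right,
          Equiv.swap_apply_of_ne_of_ne (ne_of_gt hpa') hpb] at hv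
        rw [hqb]
        exact h.trans hv
    · rw [Finset.mem_sdiff, phiAux_neg a b _ hC]
      obtain ⟨hlt, hC'⟩ := swap_sorted a b hab p q hpq hC
      exact ⟨mem_InvSet.2 ⟨hlt, hv⟩, fun hmem => hC' (hSC _ hmem)⟩
  have hinj : Set.InjOn (phiAux a b) (InvSet (w * Equiv.swap a b)) := by
    rintro ⟨p, q⟩ hx ⟨p', q'⟩ hx' heq
    have hpq := (mem_InvSet.1 hx).1
    have hpq' := (mem_InvSet.1 hx').1
    by_cases hC : Cnd a b (p, q) <;> by_cases hC' : Cnd a b (p', q')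
    · rwa [phiAux_pos a b _ hC, phiAux_pos a b _ hC'] at heq
    · rw [phiAux_pos a b _ hC, phiAux_neg a b _ hC'] at heq
      exact absurd (heq ▸ hC) (swap_sorted a b hab p' q' hpq' hC').2
    · rw [phiAux_neg a b _ hC, phiAux_pos a b _ hC'] at heq
      exact absurd (heq ▸ hC') (swap_sorted a b hab p q hpq hC).2
    · rw [phiAux_neg a b _ hC, phiAux_neg a b _ hC'] at heq
      have e1 : p = p' := (Equiv.swap a b).injective (congrArg Prod.fst heq)
      have e2 : q = q' := (Equiv.swap a b).injective (congrArg Prod.snd heq)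
      rw [e1, e2]
  have h1 : (InvSet (w * Equiv.swap a b)).card ≤ (InvSet w \ S).card :=
    Finset.card_le_card_of_injOn (phiAux a b) hmaps hinj
  have h2 : S.card ≤ (InvSet w).card := Finset.card_le_card hS
  rw [Finset.card_sdiff_of_subset hS] at h1
  rw [invCount_eq_card, invCount_eq_card]
  omega

theorem stmt12 (n k : ℕ) (hk1 : 1 ≤ k) (hk2 : k ≤ n - 1)
    (w : Equiv.Perm (Fin n)) (hw : DescFrom n k w)
    (a b : Fin n) (hab : a < b) (hak : (a : ℕ) < k)
    (hcov : invCount w = invCount (w * Equiv.swap a b) + 1) :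
    DescFrom n k (w * Equiv.swap a b) := by
  classical
  set v := w * Equiv.swap a b with hv
  have hvw : v * Equiv.swap a b = w := by
    rw [hv, mul_assoc, Equiv.swap_mul_self, mul_one]
  have hva : v a = w b := by rw [hv]; simp [Equiv.Perm.mul_apply]
  have hvb : v b = w a := by rw [hv]; simp [Equiv.Perm.mul_apply]
  -- Step 1 : w b < w a
  have hwba : w b < w a := by
    by_contra hcon
    push_neg at hcon
    have hne : w a ≠ w b := fun e => hab.ne (w.injective e)
    have hlt : w a < w b := lt_of_le_of_ne hcon hne
    have hv1 : v b < v a := by rw [hva, hvb]; exact hlt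
    have hm := master v a b hab hv1 {(a, b)} ?_ ?_ ?_
    · rw [hvw] at hm
      simp only [Finset.card_singleton] at hm
      omega
    · intro x hx
      rw [Finset.mem_singleton] at hx
      subst hx
      exact mem_InvSet.2 ⟨hab, hv1⟩
    · intro x hx
      rw [Finset.mem_singleton] at hx
      subst hx
      exact Or.inl ⟨rfl, le_refl _⟩
    · intro x hx hmem
      rw [Finset.mem_singleton] at hx
      subst hx
      rw [hvw] at hmem
      exact absurd (mem_InvSet.1 hmem).2 (not_lt.2 hlt.le)
  -- Step 2 : no middle value
  have hmid : ∀ c : Fin n, a < c → c < b → ¬ (w b < w c ∧ w c < w a) := by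
    rintro c hac hcb ⟨h1, h2⟩
    have hm := master w a b hab hwba {(a, b), (a, c), (c, b)} ?_ ?_ ?_
    · have hcard : ({(a, b), (a, c), (c, b)} : Finset (Fin n × Fin n)).card = 3 := by
        rw [Finset.card_insert_of_notMem, Finset.card_insert_of_notMem, Finset.card_singleton]
        · simp only [Finset.mem_singleton, Prod.mk.injEq, not_and]
          exact fun e => absurd e hac.ne
        · simp only [Finset.mem_insert, Finset.mem_singleton, Prod.mk.injEq, not_or, not_and]
          exact ⟨fun _ => (hcb.ne).symm, fun e => absurd e hac.ne⟩
      rw [hcard, ← hv] at hm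
      omega
    · intro x hx
      simp only [Finset.mem_insert, Finset.mem_singleton] at hx
      rcases hx with rfl | rfl | rfl
      · exact mem_InvSet.2 ⟨hab, hwba⟩
      · exact mem_InvSet.2 ⟨hac, h2⟩
      · exact mem_InvSet.2 ⟨hcb, h1⟩
    · intro x hx
      simp only [Finset.mem_insert, Finset.mem_singleton] at hx
      rcases hx with rfl | rfl | rfl
      · exact Or.inl ⟨rfl, le_refl _⟩
      · exact Or.inl ⟨rfl, hcb.le⟩
      · exact Or.inr ⟨rfl, hac.le⟩
    · intro x hx hmem
      simp only [Finset.mem_insert, Finset.mem_singleton] at hx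
      rcases hx with rfl | rfl | rfl
      · have := (mem_InvSet.1 hmem).2
        rw [← hv, hva, hvb] at this
        exact absurd this (not_lt.2 hwba.le)
      · have := (mem_InvSet.1 hmem).2
        rw [← hv, hva] at this
        have hcc : v c = w c := by
          rw [hv]; simp only [Equiv.Perm.mul_apply]
          rw [Equiv.swap_apply_of_ne_of_ne hac.ne' hcb.ne]
        rw [hcc] at this
        exact absurd this (not_lt.2 h1.le)
      · have := (mem_InvSet.1 hmem).2
        rw [← hv, hvb] at this
        have hcc : v c = w c := by
          rw [hv]; simp only [Equiv.Perm.mul_apply]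
          rw [Equiv.swap_apply_of_ne_of_ne hac.ne' hcb.ne]
        rw [hcc] at this
        exact absurd this (not_lt.2 h2.le)
  -- Step 3 : the descent property
  intro p q hkp hpq
  rw [hv]
  simp only [Equiv.Perm.mul_apply]
  have hap : (a : ℕ) < (p : ℕ) := lt_of_lt_of_le hak hkp
  have hap' : p ≠ a := fun e => by rw [e] at hap; omega
  have haq : q ≠ a := fun e => by
    have : (p : ℕ) < (q : ℕ) := hpq
    rw [e] at this; omega
  by_cases hbp : p = b
  · have hqb : q ≠ b := by rw [← hbp]; exact ne_of_gt hpq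
    rw [hbp, Equiv.swap_apply_right, Equiv.swap_apply_of_ne_of_ne haq hqb]
    have h1 : w q < w b := by rw [← hbp]; exact hw _ _ hkp hpq
    exact h1.trans hwba
  · by_cases hbq : q = b
    · rw [hbq, Equiv.swap_apply_right, Equiv.swap_apply_of_ne_of_ne hap' hbp]
      have h1 : w b < w p := by have h2 := hw p q hkp hpq; rwa [hbq] at h2
      have hpltb : p < b := by rw [← hbq]; exact hpq
      have haltp : a < p := by
        rw [Fin.lt_def]; exact hap
      have := hmid p haltp hpltb
      have hne : w p ≠ w a := fun e => hap' (w.injective e)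
      rcases lt_or_gt_of_ne hne with h' | h'
      · exact absurd ⟨h1, h'⟩ this
      · exact h'
    · rw [Equiv.swap_apply_of_ne_of_ne hap' hbp, Equiv.swap_apply_of_ne_of_ne haq hbq]
      exact hw _ _ hkp hpq
end

section
/- Let k ∈ [n-1] and w ∈ Sₙ with w(k+1) > w(k+2) > ⋯ > w(n). Suppose an increasing k-chain from u to w swaps values a < b at some step, and suppose c satisfies a < c < b and c appears among the first k values of w (w⁻¹(c) ≤ k). If the tile-condition holds — namely c is fixed throughout the chain — then c is also among the first k values of u, i.e., u⁻¹(c) ≤ k, and moreover the value c is swapped with no number at all: if c were swapped with some d in the chain then either c < b < d forces b among u's first k values (contradiction) or a < d < b forces d among u's first k values (contradiction). -/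
open Finset

namespace Aux

variable {n : ℕ}

open Classical in
noncomputable def ind (P : Prop) : ℤ := if P then 1 else 0

lemma ind_nonneg (P : Prop) : 0 ≤ ind P := by unfold ind; split <;> simp

lemma ind_le_one (P : Prop) : ind P ≤ 1 := by unfold ind; split <;> simp

lemma ind_true {P : Prop} (h : P) : ind P = 1 := by simp [ind, h]
lemma ind_false {P : Prop} (h : ¬ P) : ind P = 0 := by simp [ind, h]

lemma invCount_sum (w : Equiv.Perm (Fin n)) :
    (invCount w : ℤ) = ∑ p ∈ univ.filter (fun p : Fin n × Fin n => p.1 < p.2),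
      ind (w p.2 < w p.1) := by
  rw [invCount, ← Finset.filter_filter, Finset.card_filter]
  push_cast
  apply Finset.sum_congr rfl
  intro p hp
  by_cases h : w p.2 < w p.1 <;> simp [h, ind_true, ind_false, ind]

open Classical in
lemma invCount_mul_swap (u : Equiv.Perm (Fin n)) (i j : Fin n) (hij : i < j) :
    (invCount (u * Equiv.swap i j) : ℤ) =
      (invCount u : ℤ) + (1 - 2 * ind (u j < u i))
        + ∑ l ∈ Finset.Ioo i j, ((1 - 2 * ind (u l < u i)) + (1 - 2 * ind (u j < u l))) := by
  set σ := Equiv.swap i j with hσ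
  set P : Finset (Fin n × Fin n) := univ.filter (fun p : Fin n × Fin n => p.1 < p.2) with hP
  set F : Fin n × Fin n → Fin n × Fin n :=
    fun p => if σ p.1 < σ p.2 then (σ p.1, σ p.2) else (σ p.2, σ p.1) with hF
  set g : Fin n × Fin n → ℤ := fun p => ind (u p.2 < u p.1) with hg
  have hmemP : ∀ p : Fin n × Fin n, p ∈ P ↔ p.1 < p.2 := by
    intro p; simp [hP]
  have hne : ∀ p : Fin n × Fin n, p ∈ P → σ p.1 ≠ σ p.2 := by
    intro p hp h
    exact absurd (σ.injective h) (ne_of_lt ((hmemP p).1 hp))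
  have hFP : ∀ p ∈ P, F p ∈ P := by
    intro p hp
    rw [hmemP]
    by_cases h : σ p.1 < σ p.2
    · simp [hF, h]
    · have := lt_of_le_of_ne (not_lt.1 h) (hne p hp).symm
      simp [hF, h, this]
  have hσσ : ∀ x, σ (σ x) = x := fun x => Equiv.swap_apply_self i j x
  have hFF : ∀ p ∈ P, F (F p) = p := by
    intro p hp
    by_cases h : σ p.1 < σ p.2
    · have h2 : F p = (σ p.1, σ p.2) := by simp [hF, h]
      rw [h2]
      have hlt := (hmemP p).1 hp
      simp [hF, hσσ, hlt]
    · have h2 : F p = (σ p.2, σ p.1) := by simp [hF, h]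
      rw [h2]
      have hlt := (hmemP p).1 hp
      have h3 : ¬ p.2 < p.1 := lt_asymm hlt
      simp [hF, hσσ, h3]
  -- pointwise identity
  have hpoint : ∀ p ∈ P, ind (u (σ p.2) < u (σ p.1))
      = g (F p) + (if σ p.2 < σ p.1 then 1 - 2 * g (F p) else 0) := by
    intro p hp
    by_cases h : σ p.1 < σ p.2
    · have h' : ¬ σ p.2 < σ p.1 := not_lt.2 (le_of_lt h)
      simp only [hF, if_pos h, if_neg h', hg, add_zero]
    · have h' : σ p.2 < σ p.1 := lt_of_le_of_ne (not_lt.1 h) (Ne.symm (hne p hp))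
      simp only [hF, if_neg h, if_pos h', hg]
      have hval : u (σ p.1) ≠ u (σ p.2) := fun hh => (hne p hp) (u.injective hh)
      by_cases hc : u (σ p.2) < u (σ p.1)
      · rw [ind_true hc, ind_false (not_lt.2 (le_of_lt hc))]; ring
      · rw [ind_false hc,
          ind_true (lt_of_le_of_ne (not_lt.1 hc) hval)]; ring
  have hsum1 : (invCount (u * σ) : ℤ) = ∑ p ∈ P, ind (u (σ p.2) < u (σ p.1)) := by
    rw [invCount_sum]; apply Finset.sum_congr rfl; intro p hp; rfl
  have hsum2 : ∑ p ∈ P, g (F p) = (invCount u : ℤ) := by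
    rw [invCount_sum]
    exact Finset.sum_nbij' F F hFP hFP hFF hFF (fun p hp => rfl)
  rw [hsum1, Finset.sum_congr rfl hpoint, Finset.sum_add_distrib, hsum2]
  -- now the flip sum
  have flipQ : ∑ p ∈ P, (if σ p.2 < σ p.1 then 1 - 2 * g (F p) else 0)
      = ∑ p ∈ P.filter (fun p => σ p.2 < σ p.1), (1 - 2 * g (F p)) := by
    exact (Finset.sum_filter _ _).symm
  rw [flipQ]
  have hQ : P.filter (fun p => σ p.2 < σ p.1)
      = (((Ioo i j).image fun l => ((i : Fin n), l)) ∪ ((Ioo i j).image fun l => (l, j)))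
        ∪ {((i : Fin n), j)} := by
    ext ⟨p1, p2⟩
    simp only [Finset.mem_filter, hmemP, Finset.mem_union, Finset.mem_image, Finset.mem_Ioo,
      Finset.mem_singleton, Finset.mem_insert, Prod.mk.injEq, hP, Finset.mem_univ, true_and,
      Finset.filter_congr_decidable]
    constructor
    · rintro ⟨h12, hflip⟩
      rcases eq_or_ne i p1 with rfl | h1i
      · rcases eq_or_ne j p2 with rfl | h2j
        · exact Or.inr ⟨rfl, rfl⟩
        · have h2i : p2 ≠ i := (ne_of_gt h12)
          have : σ p2 = p2 := Equiv.swap_apply_of_ne_of_ne h2i (Ne.symm h2j)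
          rw [this, Equiv.swap_apply_left] at hflip
          exact Or.inl (Or.inl ⟨p2, ⟨h12, hflip⟩, rfl, rfl⟩)
      · rcases eq_or_ne j p2 with rfl | h2j
        · rcases eq_or_ne p1 j with h1j | h1j
          · exact absurd (h1j ▸ h12) (lt_irrefl _)
          · have : σ p1 = p1 := Equiv.swap_apply_of_ne_of_ne (Ne.symm h1i) h1j
            rw [this, Equiv.swap_apply_right] at hflip
            exact Or.inl (Or.inr ⟨p1, ⟨hflip, h12⟩, rfl, rfl⟩)
        · exfalso
          rcases eq_or_ne j p1 with rfl | h1j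
          · have h2i : p2 ≠ i := fun hh => absurd (hh ▸ h12) (not_lt.2 (le_of_lt hij))
            rw [Equiv.swap_apply_right, Equiv.swap_apply_of_ne_of_ne h2i (Ne.symm h2j)] at hflip
            exact absurd (hflip.trans (hij.trans h12)) (lt_irrefl _)
          · rcases eq_or_ne i p2 with rfl | h2i
            · rw [Equiv.swap_apply_left, Equiv.swap_apply_of_ne_of_ne (Ne.symm h1i) (Ne.symm h1j)] at hflip
              exact absurd (h12.trans (hij.trans hflip)) (lt_irrefl _)
            · rw [Equiv.swap_apply_of_ne_of_ne (Ne.symm h1i) (Ne.symm h1j),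
                Equiv.swap_apply_of_ne_of_ne (Ne.symm h2i) (Ne.symm h2j)] at hflip
              exact absurd h12 (not_lt.2 (le_of_lt hflip))
    · rintro (( ⟨l, ⟨hil, hlj⟩, rfl, rfl⟩ | ⟨l, ⟨hil, hlj⟩, rfl, rfl⟩) | ⟨rfl, rfl⟩)
      · refine ⟨hil, ?_⟩
        rw [Equiv.swap_apply_left, Equiv.swap_apply_of_ne_of_ne (ne_of_gt hil) (ne_of_lt hlj)]
        exact hlj
      · refine ⟨hlj, ?_⟩
        rw [Equiv.swap_apply_right, Equiv.swap_apply_of_ne_of_ne (ne_of_gt hil) (ne_of_lt hlj)]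
        exact hil
      · refine ⟨hij, ?_⟩
        rw [Equiv.swap_apply_left, Equiv.swap_apply_right]
        exact hij
  rw [hQ]
  have hd1 : Disjoint ((Ioo i j).image fun l => ((i : Fin n), l)) ((Ioo i j).image fun l => (l, j)) := by
    rw [Finset.disjoint_left]
    rintro p hp1 hp2
    simp only [Finset.mem_image, Finset.mem_Ioo] at hp1 hp2
    obtain ⟨l, ⟨hil, hlj⟩, rfl⟩ := hp1
    obtain ⟨l', ⟨hil', hlj'⟩, he⟩ := hp2
    rw [Prod.mk.injEq] at he
    exact absurd (he.1 ▸ hil') (lt_irrefl _)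
  have hd2 : Disjoint (((Ioo i j).image fun l => ((i : Fin n), l)) ∪ ((Ioo i j).image fun l => (l, j)))
      ({((i : Fin n), j)} : Finset (Fin n × Fin n)) := by
    rw [Finset.disjoint_right]
    rintro p hp1 hp2
    simp only [Finset.mem_singleton] at hp1
    subst hp1
    simp only [Finset.mem_union, Finset.mem_image, Finset.mem_Ioo, Prod.mk.injEq] at hp2
    rcases hp2 with ⟨l, ⟨hil, hlj⟩, he1, he2⟩ | ⟨l, ⟨hil, hlj⟩, he1, he2⟩
    · exact absurd (he2 ▸ hlj) (lt_irrefl _)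
    · exact absurd (he1 ▸ hil) (lt_irrefl _)
  rw [Finset.sum_union hd2, Finset.sum_union hd1, Finset.sum_singleton,
    Finset.sum_image (by intro x _ y _ h; exact (Prod.ext_iff.1 h).2),
    Finset.sum_image (by intro x _ y _ h; exact (Prod.ext_iff.1 h).1)]
  have e1 : ∀ l ∈ Ioo i j, (1 - 2 * g (F ((i : Fin n), l))) = 1 - 2 * ind (u j < u l) := by
    intro l hl
    rw [Finset.mem_Ioo] at hl
    have hσl : σ l = l := Equiv.swap_apply_of_ne_of_ne (ne_of_gt hl.1) (ne_of_lt hl.2)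
    have h1 : ¬ σ (i, l).1 < σ (i, l).2 := by
      simp only [hσ]
      rw [Equiv.swap_apply_left]
      show ¬ j < σ l
      rw [show (Equiv.swap i j) l = l from hσl]
      exact not_lt.2 (le_of_lt hl.2)
    simp only [hF, if_neg h1, hg]
    rw [show σ (i, l).2 = l from hσl, show σ (i, l).1 = j from Equiv.swap_apply_left i j]
  have e2 : ∀ l ∈ Ioo i j, (1 - 2 * g (F (l, (j : Fin n)))) = 1 - 2 * ind (u l < u i) := by
    intro l hl
    rw [Finset.mem_Ioo] at hl
    have hσl : σ l = l := Equiv.swap_apply_of_ne_of_ne (ne_of_gt hl.1) (ne_of_lt hl.2)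
    have h1 : ¬ σ (l, j).1 < σ (l, j).2 := by
      show ¬ σ l < σ j
      rw [hσl, show σ j = i from Equiv.swap_apply_right i j]
      exact not_lt.2 (le_of_lt hl.1)
    simp only [hF, if_neg h1, hg]
    rw [show σ (l, j).1 = l from hσl, show σ (l, j).2 = i from Equiv.swap_apply_right i j]
  have e3 : (1 - 2 * g (F ((i : Fin n), j))) = 1 - 2 * ind (u j < u i) := by
    have h1 : ¬ σ ((i : Fin n), j).1 < σ ((i : Fin n), j).2 := by
      show ¬ σ i < σ j
      rw [show σ i = j from Equiv.swap_apply_left i j, show σ j = i from Equiv.swap_apply_right i j]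
      exact not_lt.2 (le_of_lt hij)
    simp only [hF, if_neg h1, hg]
    rw [show σ ((i : Fin n), j).1 = j from Equiv.swap_apply_left i j,
      show σ ((i : Fin n), j).2 = i from Equiv.swap_apply_right i j]
  rw [Finset.sum_congr rfl e1, Finset.sum_congr rfl e2, e3, Finset.sum_add_distrib]
  ring

lemma step_facts (u : Equiv.Perm (Fin n)) (i j : Fin n) (hij : i < j)
    (h : invCount (u * Equiv.swap i j) = invCount u + 1) :
    u i < u j ∧ ∀ l : Fin n, i < l → l < j → ¬(u i < u l ∧ u l < u j) := by
  have key := invCount_mul_swap u i j hij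
  rw [h] at key
  push_cast at key
  have hS : ∑ l ∈ Finset.Ioo i j, ((1 - 2 * ind (u l < u i)) + (1 - 2 * ind (u j < u l)))
      = 2 * ind (u j < u i) := by linarith
  have hne_ij : u i ≠ u j := fun hh => absurd (u.injective hh) (ne_of_lt hij)
  have hij_val : u i < u j := by
    by_contra hcon
    have hlt : u j < u i := lt_of_le_of_ne (not_lt.1 hcon) (Ne.symm hne_ij)
    have hX : ind (u j < u i) = 1 := ind_true hlt
    have hle : ∀ l ∈ Finset.Ioo i j,
        ((1 - 2 * ind (u l < u i)) + (1 - 2 * ind (u j < u l))) ≤ 0 := by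
      intro l hl
      rw [Finset.mem_Ioo] at hl
      by_cases hc : u l < u i
      · rw [ind_true hc]
        have := ind_nonneg (u j < u l)
        linarith
      · have hnei : u i ≠ u l := fun hh => absurd (u.injective hh) (ne_of_lt hl.1)
        have : u i < u l := lt_of_le_of_ne (not_lt.1 hc) hnei
        rw [ind_true (hlt.trans this)]
        have := ind_nonneg (u l < u i)
        linarith
    have := Finset.sum_nonpos hle
    rw [hS, hX] at this
    linarith
  refine ⟨hij_val, ?_⟩
  intro l hil hlj ⟨h1, h2⟩
  have hX : ind (u j < u i) = 0 := ind_false (not_lt.2 (le_of_lt hij_val))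
  rw [hX, mul_zero] at hS
  have hpos : ∀ x ∈ Finset.Ioo i j,
      (0:ℤ) ≤ ((1 - 2 * ind (u x < u i)) + (1 - 2 * ind (u j < u x))) := by
    intro x hx
    by_cases hc : u x < u i
    · have : ¬ u j < u x := not_lt.2 (le_of_lt ((hc.trans hij_val)))
      rw [ind_true hc, ind_false this]
      linarith
    · rw [ind_false hc]
      have := ind_le_one (u j < u x)
      linarith
  have hall := (Finset.sum_eq_zero_iff_of_nonneg hpos).1 hS l (Finset.mem_Ioo.2 ⟨hil, hlj⟩)
  rw [ind_false (not_lt.2 (le_of_lt h1)), ind_false (not_lt.2 (le_of_lt h2))] at hall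
  norm_num at hall

end Aux

theorem stmt19 (n k d : ℕ) (hk1 : 1 ≤ k) (hk2 : k ≤ n - 1)
    (w u : Equiv.Perm (Fin n)) (hw : DescFrom n k w)
    (v : Fin (d + 1) → Equiv.Perm (Fin n)) (a b : Fin d → Fin n)
    (hchain : IsIncKChain n k v a b) (hu : v 0 = u) (hwend : v (Fin.last d) = w)
    (m : Fin d) (c : Fin n)
    (hc1 : v m.succ (b m) < c) (hc2 : c < v m.succ (a m))
    (hck : (w.symm c : ℕ) < k) :
    (u.symm c : ℕ) < k ∧ ∀ t : Fin (d + 1), (v t).symm c = w.symm c := by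
  obtain ⟨hstep, hinc⟩ := hchain
  have h1 : ∀ r : Fin d, (a r : ℕ) < k := fun r => (hstep r).1
  have h2 : ∀ r : Fin d, k ≤ (b r : ℕ) := fun r => (hstep r).2.1
  have h3 : ∀ r : Fin d, v r.castSucc = v r.succ * Equiv.swap (a r) (b r) :=
    fun r => (hstep r).2.2.1
  have h4 : ∀ r : Fin d, invCount (v r.succ) = invCount (v r.castSucc) + 1 :=
    fun r => (hstep r).2.2.2
  have hab : ∀ r : Fin d, a r < b r := fun r => by
    rw [Fin.lt_def]; exact lt_of_lt_of_le (h1 r) (h2 r)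
  have hanb : ∀ r r' : Fin d, a r ≠ b r' := fun r r' h => by
    have := h1 r; have := h2 r'; rw [h] at *; omega
  have h5 : ∀ r : Fin d, v r.succ = v r.castSucc * Equiv.swap (a r) (b r) := by
    intro r
    rw [h3 r, mul_assoc, Equiv.swap_mul_self, mul_one]
  have hfacts := fun r : Fin d =>
    Aux.step_facts (v r.castSucc) (a r) (b r) (hab r) (by rw [← h5 r]; exact h4 r)
  have hcov : ∀ r : Fin d, ∀ l : Fin n, a r < l → l < b r →
      ¬(v r.castSucc (a r) < v r.castSucc l ∧ v r.castSucc l < v r.castSucc (b r)) :=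
    fun r => (hfacts r).2
  have vcs_a : ∀ r : Fin d, v r.castSucc (a r) = v r.succ (b r) := by
    intro r; rw [h3 r]; simp [Equiv.Perm.mul_apply, Equiv.swap_apply_left]
  have vcs_b : ∀ r : Fin d, v r.castSucc (b r) = v r.succ (a r) := by
    intro r; rw [h3 r]; simp [Equiv.Perm.mul_apply, Equiv.swap_apply_right]
  -- α m < c < β m
  have hαc : v m.castSucc (a m) < c := by rw [vcs_a m]; exact hc1
  have hcβ' : c < v m.castSucc (b m) := by rw [vcs_b m]; exact hc2
  -- Fact C: after step r, the small value stays at position b r forever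
  have fact_back : ∀ r : Fin d, ∀ t : Fin (d+1), r.succ ≤ t →
      v t (b r) = v r.castSucc (a r) := by
    intro r t
    induction t using Fin.induction with
    | zero =>
      intro h
      rw [Fin.le_def] at h
      simp only [Fin.val_succ, Fin.val_zero] at h
      omega
    | succ s ih =>
      intro hle
      rcases eq_or_ne r s with rfl | hrs
      · exact (vcs_a r).symm
      · have hlt : (r : ℕ) < (s : ℕ) := by
          rw [Fin.le_def] at hle
          simp only [Fin.val_succ] at hle
          have : (r : ℕ) ≠ (s : ℕ) := fun hh => hrs (Fin.ext hh)
          omega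
        have hle' : r.succ ≤ s.castSucc := by
          rw [Fin.le_def]; simp only [Fin.val_succ, Fin.coe_castSucc]; omega
        have ihv := ih hle'
        have hbb : b r ≠ b s := by
          intro hh
          rw [hh] at ihv
          rw [vcs_b s] at ihv
          -- ihv : v s.succ (a s) = α r ; but v s.succ (a s) = β s > α s > α r
          have hgt : v r.castSucc (a r) < v s.castSucc (a s) := hinc r s (by rw [Fin.lt_def]; exact hlt)
          have : v s.castSucc (a s) < v s.castSucc (b s) := (hfacts s).1
          rw [vcs_b s] at this
          rw [ihv] at this
          exact absurd (hgt.trans this) (lt_irrefl _)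
        rw [h5 s]
        simp only [Equiv.Perm.mul_apply]
        rw [Equiv.swap_apply_of_ne_of_ne (Ne.symm (hanb s r)) hbb]
        exact ihv
  have w_b : ∀ r : Fin d, w (b r) = v r.castSucc (a r) := by
    intro r
    rw [← hwend]
    apply fact_back r (Fin.last d)
    rw [Fin.le_def]; simp only [Fin.val_succ, Fin.val_last]; omega
  -- c is never the small value
  have hcα : ∀ r : Fin d, c ≠ v r.castSucc (a r) := by
    intro r hh
    have : w.symm c = b r := by rw [hh, ← w_b r, Equiv.symm_apply_apply]
    rw [this] at hck
    exact absurd hck (not_lt.2 (h2 r))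
  -- values never move before their small-swap step
  have preBack : ∀ s : Fin d, (∀ r : Fin d, r < s → v r.castSucc (a r) ≠ v s.castSucc (b s)) →
      ∀ t : Fin (d+1), t ≤ s.castSucc → v t (b s) = v s.castSucc (b s) := by
    intro s hne t
    induction t using Fin.reverseInduction with
    | last =>
      intro hle
      have he : Fin.last d = s.castSucc := le_antisymm hle (Fin.le_last _)
      rw [he]
    | cast r ih =>
      intro hle
      rcases eq_or_ne s r with rfl | hsr
      · rfl
      · have hlt : (r : ℕ) < (s : ℕ) := by
          rw [Fin.le_def] at hle
          simp only [Fin.coe_castSucc] at hle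
          have : (r : ℕ) ≠ (s : ℕ) := fun hh => hsr (Fin.ext hh.symm)
          omega
        have hle' : r.succ ≤ s.castSucc := by
          rw [Fin.le_def]; simp only [Fin.val_succ, Fin.coe_castSucc]; omega
        have ihv := ih hle'
        have hbb : b s ≠ b r := by
          intro hh
          rw [hh] at ihv
          rw [← vcs_a r, ← hh] at ihv
          exact hne r (by rw [Fin.lt_def]; exact hlt) ihv
        rw [h3 r]
        simp only [Equiv.Perm.mul_apply]
        rw [Equiv.swap_apply_of_ne_of_ne (Ne.symm (hanb r s)) hbb]
        exact ihv
  -- after its big-swap step, a value stays at the front position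
  have post : ∀ s : Fin d, v s.castSucc (b s) = c → ∀ t : Fin (d+1), s.succ ≤ t →
      v t (a s) = c := by
    intro s hcs t
    induction t using Fin.induction with
    | zero =>
      intro h
      rw [Fin.le_def] at h
      simp only [Fin.val_succ, Fin.val_zero] at h
      omega
    | succ r ih =>
      intro hle
      rcases eq_or_ne s r with rfl | hsr
      · rw [← vcs_b s]; exact hcs
      · have hlt : (s : ℕ) < (r : ℕ) := by
          rw [Fin.le_def] at hle
          simp only [Fin.val_succ] at hle
          have : (s : ℕ) ≠ (r : ℕ) := fun hh => hsr (Fin.ext hh)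
          omega
        have hle' : s.succ ≤ r.castSucc := by
          rw [Fin.le_def]; simp only [Fin.val_succ, Fin.coe_castSucc]; omega
        have ihv := ih hle'
        have haa : a s ≠ a r := by
          intro hh
          rw [hh] at ihv
          exact hcα r ihv.symm
        rw [h5 r]
        simp only [Equiv.Perm.mul_apply]
        rw [Equiv.swap_apply_of_ne_of_ne haa (hanb s r)]
        exact ihv
  -- main claim: c is never the big value either
  have hcbig : ∀ s : Fin d, v s.castSucc (b s) ≠ c := by
    intro s hcs
    have hsm : s ≠ m := by
      intro hh
      rw [hh] at hcs
      exact absurd (hcs ▸ hcβ') (lt_irrefl _)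
    rcases lt_or_gt_of_ne (fun hh : (s:ℕ) = (m:ℕ) => hsm (Fin.ext hh)) with hlt | hgt
    · -- s < m : c sits at front position a s at time m
      have hvm : v m.castSucc (a s) = c := by
        apply post s hcs
        rw [Fin.le_def]; simp only [Fin.val_succ, Fin.coe_castSucc]; omega
      have hasam : (a s : ℕ) < (a m : ℕ) := by
        have hne : a s ≠ a m := by
          intro hh; rw [hh] at hvm; exact hcα m hvm.symm
        have hnlt : ¬ ((a m : ℕ) < (a s : ℕ)) := by
          intro hl
          apply hcov m (a s) (by rw [Fin.lt_def]; exact hl)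
            (by rw [Fin.lt_def]; exact lt_of_lt_of_le (h1 s) (h2 m))
          rw [hvm]
          exact ⟨hαc, hcβ'⟩
        have : (a s : ℕ) ≠ (a m : ℕ) := fun hh => hne (Fin.ext hh)
        omega
      -- dichotomy for the history of the value α m
      have dich : ∀ t : Fin (d+1), s.castSucc ≤ t → t ≤ m.castSucc →
          (v t (a m) = v m.castSucc (a m) ∨
            ∃ r : Fin d, s < r ∧ r < m ∧ v r.castSucc (b r) = v m.castSucc (a m)) := by
        intro t
        induction t using Fin.reverseInduction with
        | last =>
          intro _ hle2
          have he : Fin.last d = m.castSucc := le_antisymm hle2 (Fin.le_last _)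
          rw [he]
          exact Or.inl rfl
        | cast r ih =>
          intro ht1 ht2
          rcases eq_or_ne m r with rfl | hmr
          · exact Or.inl rfl
          · have hrm : (r : ℕ) < (m : ℕ) := by
              rw [Fin.le_def] at ht2
              simp only [Fin.coe_castSucc] at ht2
              have : (r : ℕ) ≠ (m : ℕ) := fun hh => hmr (Fin.ext hh.symm)
              omega
            have hsr : (s : ℕ) ≤ (r : ℕ) := by
              rw [Fin.le_def] at ht1
              simpa using ht1
            have hrec := ih (by rw [Fin.le_def]; simp only [Fin.val_succ, Fin.coe_castSucc]; omega)
              (by rw [Fin.le_def]; simp only [Fin.val_succ, Fin.coe_castSucc]; omega)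
            rcases hrec with hval | hesc
            · by_cases haa : a m = a r
              · right
                refine ⟨r, ?_, by rw [Fin.lt_def]; exact hrm, ?_⟩
                · rw [Fin.lt_def]
                  have : (s : ℕ) ≠ (r : ℕ) := by
                    intro hh
                    have : a s = a r := by rw [Fin.ext hh]
                    rw [this, ← haa] at hasam
                    omega
                  omega
                · rw [vcs_b r, ← haa]
                  exact hval
              · left
                rw [h3 r]
                simp only [Equiv.Perm.mul_apply]
                rw [Equiv.swap_apply_of_ne_of_ne (fun hh => haa hh) (hanb m r)]
                exact hval
            · exact Or.inr hesc
      have hd := dich s.castSucc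
        (le_refl _)
        (by rw [Fin.le_def]; simp only [Fin.coe_castSucc]; omega)
      rcases hd with hval | ⟨r, hsr, hrm, hesc⟩
      · -- α m is at front position a m at time s : contradicts cover condition at s
        apply hcov s (a m) (by rw [Fin.lt_def]; exact hasam)
          (by rw [Fin.lt_def]; exact lt_of_lt_of_le (h1 m) (h2 s))
        rw [hval, hcs]
        exact ⟨hinc s m (by rw [Fin.lt_def]; exact hlt), hαc⟩
      · -- α m came from the back at step r, s < r < m
        have hprer := preBack r (by
          intro r' hr'
          rw [hesc]
          intro hh
          have h1' : v r'.castSucc (a r') < v r.castSucc (a r) := hinc r' r hr'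
          have h2' : v r.castSucc (a r) < v m.castSucc (a m) := hinc r m hrm
          rw [hh] at h1'
          exact absurd (h1'.trans h2') (lt_irrefl _))
        have hvsr : v s.castSucc (b r) = v m.castSucc (a m) := by
          rw [← hesc]
          apply hprer
          rw [Fin.le_def]; simp only [Fin.coe_castSucc]
          rw [Fin.lt_def] at hsr; omega
        have hbsbr : (b s : ℕ) < (b r : ℕ) := by
          have hne : b s ≠ b r := by
            intro hh
            rw [← hh, hcs] at hvsr
            have : v m.castSucc (a m) < c := hαc
            rw [← hvsr] at this
            exact absurd this (lt_irrefl _)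
          have hnlt : ¬ ((b r : ℕ) < (b s : ℕ)) := by
            intro hl
            apply hcov s (b r) (by rw [Fin.lt_def]; exact lt_of_lt_of_le (h1 s) (h2 r))
              (by rw [Fin.lt_def]; exact hl)
            rw [hvsr, hcs]
            exact ⟨hinc s m (by rw [Fin.lt_def]; exact hlt), hαc⟩
          have : (b s : ℕ) ≠ (b r : ℕ) := fun hh => hne (Fin.ext hh)
          omega
        have hw1 := hw (b s) (b r) (h2 s) (by rw [Fin.lt_def]; exact hbsbr)
        rw [w_b s, w_b r] at hw1
        have := hinc s r hsr
        exact absurd (this.trans hw1) (lt_irrefl _)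
    · -- m < s : c sits at back position b s at time m
      have hvm : v m.castSucc (b s) = c := by
        rw [← hcs]
        apply preBack s
        · intro r _
          rw [hcs]
          exact fun hh => hcα r hh.symm
        · rw [Fin.le_def]; simp only [Fin.coe_castSucc]; omega
      have hbmbs : (b m : ℕ) < (b s : ℕ) := by
        have hne : b m ≠ b s := by
          intro hh
          rw [← hh] at hvm
          exact absurd (hvm ▸ hcβ') (lt_irrefl _)
        have hnlt : ¬ ((b s : ℕ) < (b m : ℕ)) := by
          intro hl
          apply hcov m (b s) (by rw [Fin.lt_def]; exact lt_of_lt_of_le (h1 m) (h2 s))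
            (by rw [Fin.lt_def]; exact hl)
          rw [hvm]
          exact ⟨hαc, hcβ'⟩
        have : (b m : ℕ) ≠ (b s : ℕ) := fun hh => hne (Fin.ext hh)
        omega
      have hw1 := hw (b m) (b s) (h2 m) (by rw [Fin.lt_def]; exact hbmbs)
      rw [w_b s, w_b m] at hw1
      have := hinc m s (by rw [Fin.lt_def]; exact hgt)
      exact absurd (this.trans hw1) (lt_irrefl _)
  -- c never moves
  have hstay : ∀ r : Fin d, (v r.castSucc).symm c = (v r.succ).symm c := by
    intro r
    rw [Equiv.symm_apply_eq]
    have hx1 : (v r.succ).symm c ≠ a r := by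
      intro hh
      apply hcbig r
      rw [vcs_b r, ← hh, Equiv.apply_symm_apply]
    have hx2 : (v r.succ).symm c ≠ b r := by
      intro hh
      apply hcα r
      rw [vcs_a r, ← hh, Equiv.apply_symm_apply]
    rw [h3 r]
    simp only [Equiv.Perm.mul_apply]
    rw [Equiv.swap_apply_of_ne_of_ne hx1 hx2, Equiv.apply_symm_apply]
  have hconst : ∀ t : Fin (d+1), (v t).symm c = w.symm c := by
    intro t
    induction t using Fin.reverseInduction with
    | last => rw [hwend]
    | cast r ih => rw [hstay r]; exact ih
  constructor
  · rw [← hu, hconst 0]; exact hck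
  · exact hconst
end
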